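/- arXiv:2006.05393 — 4 statements merged into one kernel-verified Lean document; each statement's English description precedes it below -/
import Mathlib

section
/- There exists a universal constant C > 0 so that the following holds. Let ξ be a real-valued random variable with log-concave density α : ℝ → [0, ∞). Let t > 0 and 0 < δ < 1. If P(√(α(ξ + t) α(ξ − t)) ≤ (1 − δ) α(ξ)) ≥ 1/2, then Var ξ ≤ (C t / δ)². -/
/-!
One of the events `{α(ξ + t) ≤ (1 - δ) α(ξ)}` and `{α(ξ - t) ≤ (1 - δ) α(ξ)}` has probability at
least `1/4`; by reflection say the first. Log-concavity makes `α(x + t) / α(x)` nonincreasing, so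
to the right of a point `x₀` of this event carrying mass `1/8` beyond it, the density decays
geometrically with ratio `1 - δ`. Hence `[x₀, x₀ + t)` carries mass at least `δ/8`, and `α ≥ κ`
somewhere, at `c` say, with `κ = δ / (8t)`. Conversely, since the total mass is one, log-concavity
forces a density with `α(c) ≥ κ` to drop by a factor `8` over every step of length `16/κ` away
from `c`, on both sides. So the second moment about `c`, and with it the variance, is `O(1/κ²)`.
-/

open MeasureTheory ENNReal

def IsLogConcave (α : ℝ → ℝ) : Prop :=
  ∀ x y : ℝ, ∀ a b : ℝ, 0 ≤ a → 0 ≤ b → a + b = 1 →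
    α x ^ a * α y ^ b ≤ α (a * x + b * y)

open Set ProbabilityTheory

theorem Real.rpow_mul_rpow_of_add_eq_one {m a b : ℝ} (hm : 0 ≤ m) (hab : a + b = 1) :
    m ^ a * m ^ b = m := by
  rw [← Real.rpow_add' hm (by rw [hab]; exact one_ne_zero), hab, Real.rpow_one]

theorem le_or_le_of_sqrt_mul_le {a b m : ℝ} (h : √(a * b) ≤ m) : a ≤ m ∨ b ≤ m := by
  by_contra! hab
  have hm : 0 ≤ m := (Real.sqrt_nonneg _).trans h
  have : m < √(a * b) := (Real.lt_sqrt hm).2 (by nlinarith)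
  linarith

theorem measure_le_biSup_measure_Ioi (ν : Measure ℝ) [NullSingletonClass ν] (s : Set ℝ) :
    ν s ≤ ⨆ x ∈ s, ν (Ioi x) := by
  obtain ⟨T, hTs, hTc, hT⟩ := TopologicalSpace.isOpen_biUnion_countable s Ioi fun _ _ => isOpen_Ioi
  have hcover : s ⊆ {sInf s} ∪ ⋃ x ∈ T, Ioi x := by
    intro x hx
    rw [hT]
    by_cases h : ∃ y ∈ s, y < x
    · obtain ⟨y, hy, hyx⟩ := h
      exact Or.inr (mem_biUnion hy hyx)
    · push Not at h
      exact Or.inl (IsLeast.csInf_eq ⟨hx, h⟩).symm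
  have hdir : DirectedOn (Function.onFun (· ⊆ ·) Ioi) T := by
    intro x hx y hy
    rcases le_total x y with hxy | hxy
    · exact ⟨x, hx, subset_rfl, Ioi_subset_Ioi hxy⟩
    · exact ⟨y, hy, Ioi_subset_Ioi hxy, subset_rfl⟩
  calc ν s ≤ ν ({sInf s} ∪ ⋃ x ∈ T, Ioi x) := measure_mono hcover
    _ ≤ ν {sInf s} + ν (⋃ x ∈ T, Ioi x) := measure_union_le _ _
    _ = ⨆ x ∈ T, ν (Ioi x) := by rw [measure_singleton, zero_add, measure_biUnion_eq_iSup hTc hdir]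
    _ ≤ ⨆ x ∈ s, ν (Ioi x) := biSup_mono hTs

theorem lintegral_sq_sub_le_of_measure_le (ν : Measure ℝ) {c T : ℝ} (hT : 0 < T) {C r : ℝ≥0∞}
    (htail : ∀ k : ℕ, ν {x | k * T ≤ |x - c|} ≤ C * r ^ k) :
    ∫⁻ x, ENNReal.ofReal ((x - c) ^ 2) ∂ν ≤ C * ENNReal.ofReal (T ^ 2) * (1 - 4 * r)⁻¹ := by
  set shell : ℕ → Set ℝ := fun k => {x | k * T ≤ |x - c| ∧ |x - c| < (k + 1) * T}
  have hcover : univ ⊆ ⋃ k, shell k := fun x _ => mem_iUnion.2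
    ⟨⌊|x - c| / T⌋₊, (le_div_iff₀ hT).1 (Nat.floor_le (by positivity)),
      (div_lt_iff₀ hT).1 (Nat.lt_floor_add_one _)⟩
  have hshell (k : ℕ) :
      ∫⁻ x in shell k, ENNReal.ofReal ((x - c) ^ 2) ∂ν ≤
        C * ENNReal.ofReal (T ^ 2) * (4 * r) ^ k := by
    have hk : ((k : ℝ) + 1) ^ 2 ≤ 4 ^ k := by
      rw [show (4 : ℝ) ^ k = (2 ^ k) ^ 2 by rw [← pow_mul, mul_comm, pow_mul]; norm_num]
      gcongr
      exact_mod_cast Nat.lt_two_pow_self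
    calc ∫⁻ x in shell k, ENNReal.ofReal ((x - c) ^ 2) ∂ν
        ≤ ∫⁻ _ in shell k, ENNReal.ofReal (T ^ 2 * 4 ^ k) ∂ν := by
          refine setLIntegral_mono measurable_const fun x hx => ENNReal.ofReal_le_ofReal ?_
          rw [← sq_abs]
          calc |x - c| ^ 2 ≤ ((k + 1) * T) ^ 2 := pow_le_pow_left₀ (abs_nonneg _) hx.2.le 2
            _ ≤ T ^ 2 * 4 ^ k := by
              rw [mul_pow, mul_comm]; exact mul_le_mul_of_nonneg_left hk (sq_nonneg T)
      _ ≤ ENNReal.ofReal (T ^ 2 * 4 ^ k) * (C * r ^ k) := by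
          rw [setLIntegral_const]
          exact mul_le_mul_right (measure_mono (fun x hx => hx.1) |>.trans (htail k)) _
      _ = C * ENNReal.ofReal (T ^ 2) * (4 * r) ^ k := by
          rw [ENNReal.ofReal_mul (sq_nonneg T), ENNReal.ofReal_pow (by norm_num : (0 : ℝ) ≤ 4),
            ENNReal.ofReal_ofNat, mul_pow]
          ring
  calc ∫⁻ x, ENNReal.ofReal ((x - c) ^ 2) ∂ν
      ≤ ∫⁻ x in ⋃ k, shell k, ENNReal.ofReal ((x - c) ^ 2) ∂ν := by
        rw [← setLIntegral_univ]; exact lintegral_mono_set hcover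
    _ ≤ ∑' k, ∫⁻ x in shell k, ENNReal.ofReal ((x - c) ^ 2) ∂ν := lintegral_iUnion_le _ _
    _ ≤ ∑' k : ℕ, C * ENNReal.ofReal (T ^ 2) * (4 * r) ^ k := ENNReal.tsum_le_tsum hshell
    _ = C * ENNReal.ofReal (T ^ 2) * (1 - 4 * r)⁻¹ := by
        rw [ENNReal.tsum_mul_left, ENNReal.tsum_geometric]

theorem variance_id_le_lintegral_sq_sub (μ : Measure ℝ) [IsProbabilityMeasure μ] (c : ℝ) :
    variance id μ ≤ (∫⁻ x, ENNReal.ofReal ((x - c) ^ 2) ∂μ).toReal := by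
  calc variance id μ = variance (fun x => x - c) μ :=
        (variance_sub_const measurable_id.aestronglyMeasurable c).symm
    _ ≤ μ[(fun x => x - c) ^ 2] := variance_le_expectation_sq (by fun_prop)
    _ = (∫⁻ x, ENNReal.ofReal ((x - c) ^ 2) ∂μ).toReal :=
        integral_eq_lintegral_of_nonneg_ae (ae_of_all _ fun x => sq_nonneg _) (by fun_prop)

namespace IsLogConcave

variable {α : ℝ → ℝ}

theorem comp_neg (hα : IsLogConcave α) : IsLogConcave fun x => α (-x) := by
  intro x y a b ha hb hab
  convert hα (-x) (-y) a b ha hb hab using 2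
  ring

theorem min_le (hα0 : ∀ x, 0 ≤ α x) (hα : IsLogConcave α) {x y z : ℝ}
    (hxz : x ≤ z) (hzy : z ≤ y) : min (α x) (α y) ≤ α z := by
  rcases hxz.eq_or_lt with rfl | hxz
  · exact min_le_left _ _
  have hyx : 0 < y - x := by linarith
  set a := (y - z) / (y - x)
  set b := (z - x) / (y - x)
  have hab : a + b = 1 := by simp only [a, b]; field_simp; ring
  have hz : a * x + b * y = z := by simp only [a, b]; field_simp; ring
  set m := min (α x) (α y)
  have hm : 0 ≤ m := le_min (hα0 x) (hα0 y)
  have ha : 0 ≤ a := div_nonneg (by linarith) hyx.le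
  have hb : 0 ≤ b := div_nonneg (by linarith) hyx.le
  calc m = m ^ a * m ^ b := (Real.rpow_mul_rpow_of_add_eq_one hm hab).symm
    _ ≤ α x ^ a * α y ^ b :=
      mul_le_mul (Real.rpow_le_rpow hm (min_le_left _ _) ha)
        (Real.rpow_le_rpow hm (min_le_right _ _) hb)
        (Real.rpow_nonneg hm _) (Real.rpow_nonneg (hα0 x) _)
    _ ≤ α z := hz ▸ hα x y a b ha hb hab

theorem mul_apply_add_le (hα0 : ∀ x, 0 ≤ α x) (hα : IsLogConcave α) {x y τ : ℝ}
    (hxy : x ≤ y) (hτ : 0 ≤ τ) : α x * α (y + τ) ≤ α (x + τ) * α y := by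
  rcases hτ.eq_or_lt with rfl | hτ
  · rw [add_zero, add_zero, mul_comm]
  have hd : 0 < y - x + τ := by linarith
  set l := τ / (y - x + τ)
  have hl0 : 0 ≤ l := div_nonneg hτ.le hd.le
  have hl1 : 0 ≤ 1 - l := by
    rw [sub_nonneg, div_le_one hd]; linarith
  -- `x + τ` and `y` are the convex combinations of `x` and `y + τ` with swapped weights
  have h₁ : α x ^ (1 - l) * α (y + τ) ^ l ≤ α (x + τ) := by
    convert hα x (y + τ) (1 - l) l hl1 hl0 (by ring) using 2
    simp only [l]; field_simp; ring
  have h₂ : α x ^ l * α (y + τ) ^ (1 - l) ≤ α y := by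
    convert hα x (y + τ) l (1 - l) hl0 hl1 (by ring) using 2
    simp only [l]; field_simp; ring
  calc α x * α (y + τ)
      = (α x ^ (1 - l) * α x ^ l) * (α (y + τ) ^ l * α (y + τ) ^ (1 - l)) := by
        rw [Real.rpow_mul_rpow_of_add_eq_one (hα0 _) (by ring),
          Real.rpow_mul_rpow_of_add_eq_one (hα0 _) (by ring)]
    _ = (α x ^ (1 - l) * α (y + τ) ^ l) * (α x ^ l * α (y + τ) ^ (1 - l)) := by ring
    _ ≤ α (x + τ) * α y :=
      mul_le_mul h₁ h₂ (mul_nonneg (Real.rpow_nonneg (hα0 _) _) (Real.rpow_nonneg (hα0 _) _))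
        (hα0 _)

theorem apply_add_le_of_le (hα0 : ∀ x, 0 ≤ α x) (hα : IsLogConcave α) {c τ ρ : ℝ}
    (hτ : 0 ≤ τ) (hc : 0 < α c) (hcτ : α (c + τ) ≤ ρ * α c) {s : ℝ} (hs : c ≤ s) :
    α (s + τ) ≤ ρ * α s := by
  refine le_of_mul_le_mul_left ?_ hc
  calc α c * α (s + τ) ≤ α (c + τ) * α s := hα.mul_apply_add_le hα0 hs hτ
    _ ≤ ρ * α c * α s := mul_le_mul_of_nonneg_right hcτ (hα0 s)
    _ = α c * (ρ * α s) := by ring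

end IsLogConcave

noncomputable abbrev densityMeasure (α : ℝ → ℝ) : Measure ℝ :=
  volume.withDensity fun x => ENNReal.ofReal (α x)

section densityMeasure

variable {α : ℝ → ℝ}

theorem densityMeasure_apply (s : Set ℝ) :
    densityMeasure α s = ∫⁻ x in s, ENNReal.ofReal (α x) :=
  withDensity_apply' _ s

theorem densityMeasure_comp_neg (s : Set ℝ) :
    densityMeasure (fun x => α (-x)) s = densityMeasure α (-s) := by
  rw [densityMeasure_apply, densityMeasure_apply, ← image_neg_eq_neg]
  exact (Measure.measurePreserving_neg volume).setLIntegral_comp_emb measurableEmbedding_neg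
    (fun x => ENNReal.ofReal (α x)) s

theorem densityMeasure_le_mul_volume {s : Set ℝ} {m : ℝ} (hs : ∀ x ∈ s, α x ≤ m) :
    densityMeasure α s ≤ ENNReal.ofReal m * volume s := by
  rw [densityMeasure_apply, ← setLIntegral_const]
  exact setLIntegral_mono measurable_const fun x hx => ENNReal.ofReal_le_ofReal (hs x hx)

theorem mul_volume_le_densityMeasure {s : Set ℝ} (hs : MeasurableSet s) {m : ℝ}
    (hm : ∀ x ∈ s, m ≤ α x) : ENNReal.ofReal m * volume s ≤ densityMeasure α s := by
  rw [densityMeasure_apply, ← setLIntegral_const]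
  exact setLIntegral_mono' hs fun x hx => ENNReal.ofReal_le_ofReal (hm x hx)

theorem densityMeasure_setOf_nonpos : densityMeasure α {x | α x ≤ 0} = 0 :=
  le_zero_iff.1 <| (densityMeasure_le_mul_volume fun _ hx => hx).trans_eq (by simp)

theorem densityMeasure_Ici_add_le (hα0 : ∀ x, 0 ≤ α x) {a τ ρ : ℝ}
    (hdecay : ∀ x, a ≤ x → α (x + τ) ≤ ρ * α x) :
    densityMeasure α (Ici (a + τ)) ≤ ENNReal.ofReal ρ * densityMeasure α (Ici a) := by
  rw [densityMeasure_apply, densityMeasure_apply, ← image_add_const_Ici,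
    ← (measurePreserving_add_right volume τ).setLIntegral_comp_emb (measurableEmbedding_addRight τ),
    ← lintegral_const_mul' _ _ ofReal_ne_top]
  refine setLIntegral_mono' measurableSet_Ici fun x hx => ?_
  rw [← ENNReal.ofReal_mul' (hα0 x)]
  exact ENNReal.ofReal_le_ofReal (hdecay x hx)

theorem densityMeasure_Ici_add_mul_le (hα0 : ∀ x, 0 ≤ α x) {a τ ρ : ℝ} (hτ : 0 ≤ τ)
    (hdecay : ∀ x, a ≤ x → α (x + τ) ≤ ρ * α x) (k : ℕ) :
    densityMeasure α (Ici (a + k * τ)) ≤ ENNReal.ofReal ρ ^ k * densityMeasure α (Ici a) := by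
  induction k with
  | zero => simp
  | succ k ih =>
    have hk : a ≤ a + k * τ := le_add_of_nonneg_right (by positivity)
    calc densityMeasure α (Ici (a + (k + 1 : ℕ) * τ))
        = densityMeasure α (Ici (a + k * τ + τ)) := by push_cast; ring_nf
      _ ≤ ENNReal.ofReal ρ * densityMeasure α (Ici (a + k * τ)) :=
        densityMeasure_Ici_add_le hα0 fun x hx => hdecay x (hk.trans hx)
      _ ≤ ENNReal.ofReal ρ * (ENNReal.ofReal ρ ^ k * densityMeasure α (Ici a)) := by gcongr
      _ = ENNReal.ofReal ρ ^ (k + 1) * densityMeasure α (Ici a) := by ring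

end densityMeasure

namespace IsLogConcave

variable {α : ℝ → ℝ}

theorem apply_add_le_of_lt_mul (hα0 : ∀ x, 0 ≤ α x) (hα : IsLogConcave α)
    (hν : densityMeasure α univ ≤ 1) {c T ρ : ℝ} (hT : 0 ≤ T) (hρ : ρ ≤ 1)
    (hmass : 1 < ρ * α c * T) : α (c + T) ≤ ρ * α c := by
  by_contra! h
  -- otherwise `α ≥ ρ α c` on all of `[c, c + T]`, which carries mass more than one
  have hlow : ∀ z ∈ Icc c (c + T), ρ * α c ≤ α z := fun z hz =>
    (le_min (mul_le_of_le_one_left (hα0 c) hρ) h.le).trans (hα.min_le hα0 hz.1 hz.2)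
  have := (mul_volume_le_densityMeasure measurableSet_Icc hlow).trans
    ((measure_mono (subset_univ _)).trans hν)
  rw [Real.volume_Icc, add_sub_cancel_left, ← ENNReal.ofReal_mul' hT, ENNReal.ofReal_le_one] at this
  linarith

theorem densityMeasure_Ici_add_mul_le_pow (hα0 : ∀ x, 0 ≤ α x) (hα : IsLogConcave α)
    (hν : densityMeasure α univ ≤ 1) {c T ρ : ℝ} (hT : 0 ≤ T) (hρ : ρ ≤ 1)
    (hmass : 1 < ρ * α c * T) (k : ℕ) :
    densityMeasure α (Ici (c + k * T)) ≤ ENNReal.ofReal ρ ^ k := by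
  have hc : 0 < α c := (hα0 c).lt_of_ne fun h => by simp [← h] at hmass; linarith
  have hdecay (s : ℝ) (hs : c ≤ s) : α (s + T) ≤ ρ * α s :=
    hα.apply_add_le_of_le hα0 hT hc (hα.apply_add_le_of_lt_mul hα0 hν hT hρ hmass) hs
  calc densityMeasure α (Ici (c + k * T)) ≤ ENNReal.ofReal ρ ^ k * densityMeasure α (Ici c) :=
        densityMeasure_Ici_add_mul_le hα0 hT hdecay k
    _ ≤ ENNReal.ofReal ρ ^ k := mul_le_of_le_one_right' ((measure_mono (subset_univ _)).trans hν)

theorem densityMeasure_le_abs_sub_le_pow (hα0 : ∀ x, 0 ≤ α x) (hα : IsLogConcave α)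
    (hν : densityMeasure α univ ≤ 1) {c T ρ : ℝ} (hT : 0 ≤ T) (hρ : ρ ≤ 1)
    (hmass : 1 < ρ * α c * T) (k : ℕ) :
    densityMeasure α {x | k * T ≤ |x - c|} ≤ 2 * ENNReal.ofReal ρ ^ k := by
  have hright := densityMeasure_Ici_add_mul_le_pow hα0 hα hν hT hρ hmass k
  have hleft := densityMeasure_Ici_add_mul_le_pow (α := fun x => α (-x)) (c := -c)
    (fun x => hα0 (-x)) hα.comp_neg (by rwa [densityMeasure_comp_neg, neg_univ]) hT hρ
    (by simpa only [neg_neg] using hmass) k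
  have hsub : {x | k * T ≤ |x - c|} ⊆ -Ici (-c + k * T) ∪ Ici (c + k * T) := by
    intro x (hx : k * T ≤ |x - c|)
    rw [neg_Ici, mem_union, mem_Iic, mem_Ici]
    rcases le_abs'.1 hx with h | h <;> [left; right] <;> linarith
  calc densityMeasure α {x | k * T ≤ |x - c|}
      ≤ densityMeasure α (-Ici (-c + k * T)) + densityMeasure α (Ici (c + k * T)) :=
        (measure_mono hsub).trans (measure_union_le _ _)
    _ ≤ 2 * ENNReal.ofReal ρ ^ k := by
        rw [← densityMeasure_comp_neg, two_mul]; exact add_le_add hleft hright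

theorem variance_le (hα0 : ∀ x, 0 ≤ α x) (hα : IsLogConcave α)
    [IsProbabilityMeasure (densityMeasure α)] {c κ : ℝ} (hκ : 0 < κ) (hc : κ ≤ α c) :
    variance id (densityMeasure α) ≤ 1024 / κ ^ 2 := by
  -- `8⁻¹ κ T = 2 > 1` makes the density decay, and `4 * 8⁻¹ < 1` makes the moment series converge
  set T := 16 / κ
  have hT : 0 < T := by positivity
  have hmass : 1 < 8⁻¹ * α c * T := by
    have : 1 ≤ α c / κ := (one_le_div hκ).2 hc
    calc (1 : ℝ) < 2 * (α c / κ) := by linarith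
      _ = 8⁻¹ * α c * T := by simp only [T]; field_simp; ring
  have htail := densityMeasure_le_abs_sub_le_pow hα0 hα measure_univ.le hT.le (by norm_num) hmass
  have hgeom : (1 - 4 * ENNReal.ofReal 8⁻¹)⁻¹ = ENNReal.ofReal 2 := by
    rw [← ENNReal.ofReal_ofNat 4, ← ENNReal.ofReal_mul (by norm_num), ← ENNReal.ofReal_one,
      ← ENNReal.ofReal_sub _ (by norm_num), ← ENNReal.ofReal_inv_of_pos (by norm_num)]
    norm_num
  have hmoment : ∫⁻ x, ENNReal.ofReal ((x - c) ^ 2) ∂densityMeasure α ≤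
      ENNReal.ofReal (1024 / κ ^ 2) := by
    refine (lintegral_sq_sub_le_of_measure_le _ hT htail).trans_eq ?_
    rw [hgeom, ← ENNReal.ofReal_ofNat 2, ← ENNReal.ofReal_mul zero_le_two,
      ← ENNReal.ofReal_mul (by positivity)]
    congr 1
    simp only [T]
    field_simp
    norm_num
  exact (variance_id_le_lintegral_sq_sub _ c).trans
    (ENNReal.toReal_le_of_le_ofReal (by positivity) hmoment)

theorem exists_le_apply_of_lt_densityMeasure (hα0 : ∀ x, 0 ≤ α x) (hα : IsLogConcave α)
    [IsFiniteMeasure (densityMeasure α)] {t ρ m : ℝ} (ht : 0 < t) (hρ0 : 0 ≤ ρ) (hρ1 : ρ < 1)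
    (hA : ENNReal.ofReal m < densityMeasure α {x | α (x + t) ≤ ρ * α x}) :
    ∃ x, (1 - ρ) * m / t ≤ α x := by
  set ν := densityMeasure α
  set A := {x | α (x + t) ≤ ρ * α x}
  have hA' : ENNReal.ofReal m < ν (A ∩ {x | 0 < α x}) := by
    refine hA.trans_le ((measure_le_inter_add_sdiff _ _ {x | 0 < α x}).trans_eq ?_)
    have hsub : A \ {x | 0 < α x} ⊆ {x | α x ≤ 0} := fun x hx => by simpa using hx.2
    have hnull : ν (A \ {x | 0 < α x}) = 0 :=
      measure_mono_null hsub densityMeasure_setOf_nonpos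
    rw [hnull, add_zero]
  obtain ⟨x₀, ⟨hx₀A, hx₀⟩, hmx₀⟩ :=
    lt_biSup_iff.1 (hA'.trans_le (measure_le_biSup_measure_Ioi ν _))
  have hdecay (s : ℝ) (hs : x₀ ≤ s) : α (s + t) ≤ ρ * α s :=
    hα.apply_add_le_of_le hα0 ht.le hx₀ hx₀A hs
  have hsplit : ν.real (Ici x₀) ≤ ν.real (Ico x₀ (x₀ + t)) + ν.real (Ici (x₀ + t)) := by
    rw [← Ico_union_Ici_eq_Ici (le_add_of_nonneg_right ht.le)]
    exact measureReal_union_le _ _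
  have htail : ν.real (Ici (x₀ + t)) ≤ ρ * ν.real (Ici x₀) := by
    have := ENNReal.toReal_mono (by finiteness) (densityMeasure_Ici_add_le hα0 hdecay)
    rwa [ENNReal.toReal_mul, ENNReal.toReal_ofReal hρ0] at this
  have hm : m < ν.real (Ici x₀) := by
    refine (le_max_left m 0).trans_lt ?_
    rw [← ENNReal.toReal_ofReal']
    exact ENNReal.toReal_strict_mono (measure_ne_top _ _)
      (hmx₀.trans_le (measure_mono Ioi_subset_Ici_self))
  by_contra! hsmall
  have hκ : 0 ≤ (1 - ρ) * m / t := (hα0 x₀).trans (hsmall x₀).le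
  have hκt : 0 ≤ (1 - ρ) * m := by simpa using (le_div_iff₀ ht).1 hκ
  have hI : ν.real (Ico x₀ (x₀ + t)) ≤ (1 - ρ) * m := by
    have := densityMeasure_le_mul_volume fun x (_ : x ∈ Ico x₀ (x₀ + t)) => (hsmall x).le
    rw [Real.volume_Ico, add_sub_cancel_left, ← ENNReal.ofReal_mul hκ,
      div_mul_cancel₀ _ ht.ne'] at this
    exact ENNReal.toReal_le_of_le_ofReal hκt this
  nlinarith

theorem exists_le_apply_of_half_le (hα0 : ∀ x, 0 ≤ α x) (hα : IsLogConcave α)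
    [IsFiniteMeasure (densityMeasure α)] {t δ : ℝ} (ht : 0 < t) (hδ0 : 0 < δ) (hδ1 : δ < 1)
    (hS : 1 / 2 ≤ densityMeasure α {x | √(α (x + t) * α (x - t)) ≤ (1 - δ) * α x}) :
    ∃ x, δ / (8 * t) ≤ α x := by
  have hpoint (β : ℝ → ℝ) (hβ0 : ∀ x, 0 ≤ β x) (hβ : IsLogConcave β)
      [IsFiniteMeasure (densityMeasure β)]
      (hA : 1 / 8 < (densityMeasure β).real {x | β (x + t) ≤ (1 - δ) * β x}) :
      ∃ x, δ / (8 * t) ≤ β x := by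
    obtain ⟨x, hx⟩ := hβ.exists_le_apply_of_lt_densityMeasure hβ0 ht (by linarith)
      (by linarith) ((ENNReal.ofReal_lt_iff_lt_toReal (by norm_num) (measure_ne_top _ _)).2 hA)
    exact ⟨x, by convert hx using 1; field_simp; ring⟩
  set ν := densityMeasure α
  set A := {x | α (x + t) ≤ (1 - δ) * α x}
  -- `-B` is the event `α (x - t) ≤ (1 - δ) α x`; `B` is the first event for `x ↦ α (-x)`
  set B := {x | α (-(x + t)) ≤ (1 - δ) * α (-x)}
  have hsub : {x | √(α (x + t) * α (x - t)) ≤ (1 - δ) * α x} ⊆ A ∪ -B := by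
    intro x hx
    rcases le_or_le_of_sqrt_mul_le hx with h | h
    · exact Or.inl h
    · exact Or.inr (by simpa [B, ← sub_eq_neg_add] using h)
  have hhalf : 1 / 2 ≤ ν.real A + ν.real (-B) := by
    have := ENNReal.toReal_mono (measure_ne_top _ _) hS
    rw [ENNReal.toReal_div, ENNReal.toReal_one, ENNReal.toReal_ofNat] at this
    exact this.trans ((measureReal_mono hsub).trans (measureReal_union_le _ _))
  by_cases hA : 1 / 8 < ν.real A
  · exact hpoint α hα0 hα hA
  · have : IsFiniteMeasure (densityMeasure fun x => α (-x)) :=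
      ⟨by rw [densityMeasure_comp_neg]; exact measure_lt_top _ _⟩
    obtain ⟨x, hx⟩ := hpoint (fun x => α (-x)) (fun x => hα0 (-x)) hα.comp_neg
      (by rw [measureReal_def, densityMeasure_comp_neg, ← measureReal_def]; linarith)
    exact ⟨-x, hx⟩

end IsLogConcave

/-- There exists a universal constant `C > 0` such that: if `ξ` is a real random
variable with log-concave density `α`, `t > 0`, `0 < δ < 1` and
`P(√(α(ξ+t) α(ξ-t)) ≤ (1-δ) α(ξ)) ≥ 1/2`, then `Var ξ ≤ (C t / δ)²`. -/
theorem variance_via_quantitative_logconcavity :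
    ∃ C : ℝ, 0 < C ∧
      ∀ (α : ℝ → ℝ), (∀ x, 0 ≤ α x) → IsLogConcave α →
        (∫⁻ x : ℝ, ENNReal.ofReal (α x) = 1) →
        ∀ t δ : ℝ, 0 < t → 0 < δ → δ < 1 →
        (1/2 : ℝ≥0∞) ≤ (volume.withDensity fun x => ENNReal.ofReal (α x))
            {x : ℝ | Real.sqrt (α (x + t) * α (x - t)) ≤ (1 - δ) * α x} →
        ProbabilityTheory.variance id
            (volume.withDensity fun x => ENNReal.ofReal (α x)) ≤ (C * t / δ) ^ 2 := by
  refine ⟨256, by norm_num, fun α hα0 hα hint t δ ht hδ0 hδ1 hS => ?_⟩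
  have : IsProbabilityMeasure (densityMeasure α) :=
    ⟨by rw [densityMeasure_apply, Measure.restrict_univ, hint]⟩
  obtain ⟨c, hc⟩ := hα.exists_le_apply_of_half_le hα0 ht hδ0 hδ1 hS
  calc variance id (densityMeasure α) ≤ 1024 / (δ / (8 * t)) ^ 2 :=
        hα.variance_le hα0 (by positivity) hc
    _ = (256 * t / δ) ^ 2 := by field_simp; norm_num
end

section
/- Let ξ be a real-valued random variable with log-concave density α = exp(−f), where f : ℝ → (−∞, ∞] is convex. Let C ≥ 4 and let M = max_{t ∈ ℝ} α(t). Then P(f''(ξ) > (CM)²) ≤ 4/C. -/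
/-!
Write `f = -log α` and `g` for its right derivative. At an interior point `t` of `{α > 0}`
the tangent line of the convex `f` gives `α x ≤ α t * exp (-(g t * (x - t)))` for all `x`, so
the ray from `t` in the direction in which `f` increases has mass at most `α t / |g t|`, which
is at most `M / |g t|`. Hence `{g > CM}` and `{g < -CM}`, each contained in a union of such rays,
have mass at most `1 / C`. On the rest `g` is monotone with values in `[-CM, CM]`, so by the
change of variables formula `f'' = g' > (CM)²` there only on a set of length at most `2 / (CM)`,
i.e. of mass at most `2 / C`.
-/

open MeasureTheory ENNReal

open Set Real

section Covering

variable {X : Type*} [LinearOrder X] [TopologicalSpace X] [OrderTopology X]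
  [SecondCountableTopology X] [MeasurableSpace X] {μ : Measure X} {s : Set X} {c : ℝ≥0∞}

theorem measure_le_of_forall_measure_Ici_le (h : ∀ t ∈ s, μ (Ici t) ≤ c) : μ s ≤ c := by
  by_cases hmin : ∃ m ∈ s, ∀ x ∈ s, m ≤ x
  · obtain ⟨m, hm, hmin⟩ := hmin
    exact (measure_mono fun x hx => hmin x hx).trans (h m hm)
  push Not at hmin
  -- with no least element, `s` is covered by countably many nested rays `Ioi t`, `t ∈ s`
  obtain ⟨T, hTs, hTc, hT⟩ :=
    TopologicalSpace.isOpen_biUnion_countable s Ioi fun t _ => isOpen_Ioi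
  have hcover : s ⊆ ⋃ t : T, Ioi (t : X) := by
    intro x hx
    obtain ⟨y, hy, hyx⟩ := hmin x hx
    have hxT : x ∈ ⋃ t ∈ T, Ioi t := hT ▸ mem_biUnion hy hyx
    obtain ⟨t, htT, hxt⟩ := mem_iUnion₂.1 hxT
    exact mem_iUnion.2 ⟨⟨t, htT⟩, hxt⟩
  have : Countable T := hTc.to_subtype
  have hdir : Directed (· ⊆ ·) fun t : T => Ioi (t : X) :=
    Antitone.directed_le fun _ _ hst => Ioi_subset_Ioi hst
  calc μ s ≤ μ (⋃ t : T, Ioi (t : X)) := measure_mono hcover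
    _ = ⨆ t : T, μ (Ioi (t : X)) := hdir.measure_iUnion
    _ ≤ c := iSup_le fun t => (measure_mono Ioi_subset_Ici_self).trans (h t (hTs t.2))

theorem measure_le_of_forall_measure_Iic_le (h : ∀ t ∈ s, μ (Iic t) ≤ c) : μ s ≤ c :=
  measure_le_of_forall_measure_Ici_le (X := Xᵒᵈ) h

end Covering

theorem Set.OrdConnected.sep_of_monotoneOn {X Y : Type*} [Preorder X] [Preorder Y]
    {s : Set X} {t : Set Y} {g : X → Y} (hs : s.OrdConnected) (ht : t.OrdConnected)
    (hg : MonotoneOn g s) : {x ∈ s | g x ∈ t}.OrdConnected := by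
  refine ⟨fun x hx y hy z hz => ?_⟩
  have hzs : z ∈ s := hs.out hx.1 hy.1 hz
  exact ⟨hzs, ht.out hx.2 hy.2 ⟨hg hx.1 hzs hz.1, hg hzs hy.1 hz.2⟩⟩

/-- By the change of variables formula, `c |A| ≤ ∫_A g' = |g(A)| ≤ b - a` for `A = {g' > c}`.
-/
theorem volume_setOf_lt_deriv_le_of_monotoneOn {g : ℝ → ℝ} {s : Set ℝ} {a b c : ℝ}
    (hs : MeasurableSet s) (hg : MonotoneOn g s) (hgs : MapsTo g s (Icc a b)) (hc : 0 < c) :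
    volume {x ∈ s | c < deriv g x} ≤ ENNReal.ofReal ((b - a) / c) := by
  set A := {x ∈ s | c < deriv g x}
  have hAm : MeasurableSet A :=
    hs.inter (measurableSet_lt measurable_const (measurable_deriv g))
  have hdiff : ∀ x ∈ A, DifferentiableAt ℝ g x := fun x hx => by
    by_contra h
    exact (deriv_zero_of_not_differentiableAt h ▸ hx.2).not_gt hc
  have hbound : ENNReal.ofReal c * volume A ≤ ENNReal.ofReal (b - a) :=
    calc ENNReal.ofReal c * volume A = ∫⁻ _ in A, ENNReal.ofReal c :=
          (setLIntegral_const _ _).symm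
      _ ≤ ∫⁻ x in A, ENNReal.ofReal (deriv g x) :=
        setLIntegral_mono (measurable_deriv g).ennreal_ofReal
          fun x hx => ENNReal.ofReal_le_ofReal hx.2.le
      _ = volume (g '' A) := lintegral_deriv_eq_volume_image_of_monotoneOn hAm
          (fun x hx => (hdiff x hx).hasDerivAt.hasDerivWithinAt) (hg.mono (sep_subset _ _))
      _ ≤ volume (Icc a b) := measure_mono (hgs.mono_left (sep_subset _ _)).image_subset
      _ = ENNReal.ofReal (b - a) := Real.volume_Icc
  rw [ENNReal.ofReal_div_of_pos hc, ENNReal.le_div_iff_mul_le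
    (Or.inl (ENNReal.ofReal_pos.2 hc).ne') (Or.inl ENNReal.ofReal_ne_top), mul_comm]
  exact hbound

theorem withDensity_ofReal_le_ofReal_mul_volume {α : ℝ → ℝ} {M : ℝ} (hαM : ∀ x, α x ≤ M)
    (s : Set ℝ) :
    (volume.withDensity fun x => ENNReal.ofReal (α x)) s ≤ ENNReal.ofReal M * volume s := by
  rw [withDensity_apply', ← setLIntegral_const]
  exact lintegral_mono fun x => ENNReal.ofReal_le_ofReal (hαM x)

section ExponentialTails

variable {α : ℝ → ℝ} {t c k : ℝ}

theorem setLIntegral_Ici_le_of_le_mul_exp (hk : 0 < k) (hc : 0 ≤ c)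
    (hα : ∀ x, α x ≤ c * exp (-(k * (x - t)))) :
    ∫⁻ x in Ici t, ENNReal.ofReal (α x) ≤ ENNReal.ofReal (c / k) := by
  have hexp : ∀ x, c * exp (-(k * (x - t))) = c * exp (k * t) * exp (-k * x) := fun x => by
    rw [mul_assoc, ← exp_add]; ring_nf
  have hint : IntegrableOn (fun x => c * exp (-(k * (x - t)))) (Ioi t) := by
    simp_rw [hexp]
    exact (integrableOn_exp_mul_Ioi (neg_lt_zero.2 hk) t).const_mul _
  calc ∫⁻ x in Ici t, ENNReal.ofReal (α x)
      ≤ ∫⁻ x in Ioi t, ENNReal.ofReal (c * exp (-(k * (x - t)))) := by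
        rw [restrict_Ioi_eq_restrict_Ici]
        exact lintegral_mono fun x => ENNReal.ofReal_le_ofReal (hα x)
    _ = ENNReal.ofReal (∫ x in Ioi t, c * exp (-(k * (x - t)))) :=
        (ofReal_integral_eq_lintegral_ofReal hint (ae_of_all _ fun x => by positivity)).symm
    _ = ENNReal.ofReal (c / k) := by
        simp_rw [hexp]
        rw [integral_const_mul, integral_exp_mul_Ioi (neg_lt_zero.2 hk), mul_assoc, mul_div,
          mul_neg, ← exp_add, neg_mul, add_neg_cancel, exp_zero, neg_div_neg_eq,
          mul_one_div]

theorem setLIntegral_Iic_le_of_le_mul_exp (hk : k < 0) (hc : 0 ≤ c)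
    (hα : ∀ x, α x ≤ c * exp (-(k * (x - t)))) :
    ∫⁻ x in Iic t, ENNReal.ofReal (α x) ≤ ENNReal.ofReal (c / -k) := by
  have hexp : ∀ x, c * exp (-(k * (x - t))) = c * exp (k * t) * exp (-k * x) := fun x => by
    rw [mul_assoc, ← exp_add]; ring_nf
  have hint : IntegrableOn (fun x => c * exp (-(k * (x - t)))) (Iic t) := by
    simp_rw [hexp]
    exact (integrableOn_exp_mul_Iic (neg_pos.2 hk) t).const_mul _
  calc ∫⁻ x in Iic t, ENNReal.ofReal (α x)
      ≤ ∫⁻ x in Iic t, ENNReal.ofReal (c * exp (-(k * (x - t)))) :=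
        lintegral_mono fun x => ENNReal.ofReal_le_ofReal (hα x)
    _ = ENNReal.ofReal (∫ x in Iic t, c * exp (-(k * (x - t)))) :=
        (ofReal_integral_eq_lintegral_ofReal hint (ae_of_all _ fun x => by positivity)).symm
    _ = ENNReal.ofReal (c / -k) := by
        simp_rw [hexp]
        rw [integral_const_mul, integral_exp_mul_Iic (neg_pos.2 hk), mul_div, mul_assoc,
          ← exp_add, neg_mul, add_neg_cancel, exp_zero, mul_one]

end ExponentialTails

theorem ConvexOn.monotoneOn_of_hasDerivWithinAt_Ioi {S : Set ℝ} {f g : ℝ → ℝ}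
    (hf : ConvexOn ℝ S f) (hg : ∀ x ∈ interior S, HasDerivWithinAt f (g x) (Ioi x) x) :
    MonotoneOn g (interior S) :=
  hf.monotoneOn_rightDeriv.congr fun x hx =>
    (hg x hx).derivWithin (uniqueDiffWithinAt_Ioi x)

theorem ConvexOn.add_mul_sub_le_of_hasDerivWithinAt_Ioi {S : Set ℝ} {f : ℝ → ℝ} {t x f' : ℝ}
    (hf : ConvexOn ℝ S f) (ht : t ∈ interior S) (hx : x ∈ S)
    (hf' : HasDerivWithinAt f f' (Ioi t) t) : f t + f' * (x - t) ≤ f x := by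
  rcases lt_trichotomy x t with hxt | rfl | htx
  · have hslope : slope f x t ≤ f' :=
      calc slope f x t ≤ derivWithin f (Iio t) t :=
            hf.slope_le_leftDeriv_of_mem_interior hx ht hxt
        _ ≤ derivWithin f (Ioi t) t := hf.leftDeriv_le_rightDeriv_of_mem_interior ht
        _ = f' := hf'.derivWithin (uniqueDiffWithinAt_Ioi t)
    rw [slope_def_field, div_le_iff₀ (sub_pos.2 hxt)] at hslope
    linarith
  · simp
  · have hslope := hf.le_slope_of_hasDerivWithinAt_Ioi (interior_subset ht) hx htx hf'
    rw [slope_def_field, le_div_iff₀ (sub_pos.2 htx)] at hslope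
    linarith

namespace IsLogConcave

variable {α g : ℝ → ℝ} {M : ℝ}

theorem convexOn_neg_log (hlc : IsLogConcave α) :
    ConvexOn ℝ {x | 0 < α x} fun x => -Real.log (α x) := by
  have hpos : ∀ {x y a b : ℝ}, 0 < α x → 0 < α y → 0 < α x ^ a * α y ^ b :=
    fun hx hy => mul_pos (rpow_pos_of_pos hx _) (rpow_pos_of_pos hy _)
  refine ⟨fun x hx y hy a b ha hb hab => (hpos hx hy).trans_le (hlc x y a b ha hb hab),
    fun x hx y hy a b ha hb hab => ?_⟩
  calc -Real.log (α (a • x + b • y)) ≤ -Real.log (α x ^ a * α y ^ b) :=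
        neg_le_neg (Real.log_le_log (hpos hx hy) (hlc x y a b ha hb hab))
    _ = a • -Real.log (α x) + b • -Real.log (α y) := by
        rw [Real.log_mul (rpow_pos_of_pos hx a).ne' (rpow_pos_of_pos hy b).ne',
          Real.log_rpow hx, Real.log_rpow hy, smul_eq_mul, smul_eq_mul]
        ring

theorem le_mul_exp_neg_mul_sub (hlc : IsLogConcave α) {t f' : ℝ}
    (ht : t ∈ interior {x | 0 < α x})
    (hf' : HasDerivWithinAt (fun y => -Real.log (α y)) f' (Ioi t) t) (x : ℝ) :
    α x ≤ α t * exp (-(f' * (x - t))) := by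
  have hαt : 0 < α t := interior_subset (s := {x | 0 < α x}) ht
  by_cases hαx : 0 < α x
  · have hsupp := hlc.convexOn_neg_log.add_mul_sub_le_of_hasDerivWithinAt_Ioi ht hαx hf'
    calc α x = exp (Real.log (α x)) := (exp_log hαx).symm
      _ ≤ exp (Real.log (α t) + -(f' * (x - t))) := exp_le_exp.2 (by linarith)
      _ = α t * exp (-(f' * (x - t))) := by rw [exp_add, exp_log hαt]
  · exact (not_lt.1 hαx).trans (by positivity)

theorem ae_withDensity_mem_interior (hlc : IsLogConcave α) :
    ∀ᵐ x ∂(volume.withDensity fun x => ENNReal.ofReal (α x)), x ∈ interior {x | 0 < α x} := by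
  set μ := volume.withDensity fun x => ENNReal.ofReal (α x)
  have hconv : Convex ℝ {x | 0 < α x} := hlc.convexOn_neg_log.1
  have hmeas : MeasurableSet {x | 0 < α x} := hconv.ordConnected.measurableSet
  have hout : μ {x | 0 < α x}ᶜ = 0 := by
    rw [withDensity_apply _ hmeas.compl]
    exact setLIntegral_eq_zero hmeas.compl fun x hx => ENNReal.ofReal_eq_zero.2 (not_lt.1 hx)
  have hfrontier : μ (frontier {x | 0 < α x}) = 0 :=
    withDensity_absolutelyContinuous _ _ (hconv.addHaar_frontier volume)
  refine measure_mono_null (fun x hx => ?_) (measure_union_null hout hfrontier)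
  by_cases hαx : 0 < α x
  · exact Or.inr ⟨subset_closure hαx, hx⟩
  · exact Or.inl hαx

variable (hlc : IsLogConcave α)
  (hg : ∀ x ∈ interior {x | 0 < α x},
    HasDerivWithinAt (fun y => -Real.log (α y)) (g x) (Ioi x) x)
  (hαM : ∀ x, α x ≤ M) {K : ℝ} (hK : 0 < K)
include hlc hg hαM hK

theorem withDensity_setOf_lt_rightDeriv_le :
    (volume.withDensity fun x => ENNReal.ofReal (α x)) {t ∈ interior {x | 0 < α x} | K < g t}
      ≤ ENNReal.ofReal (M / K) := by
  refine measure_le_of_forall_measure_Ici_le fun t ⟨ht, hKt⟩ => ?_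
  have hαt : 0 < α t := interior_subset (s := {x | 0 < α x}) ht
  rw [withDensity_apply _ measurableSet_Ici]
  calc ∫⁻ x in Ici t, ENNReal.ofReal (α x) ≤ ENNReal.ofReal (α t / g t) :=
        setLIntegral_Ici_le_of_le_mul_exp (hK.trans hKt) hαt.le
          (hlc.le_mul_exp_neg_mul_sub ht (hg t ht))
    _ ≤ ENNReal.ofReal (M / K) :=
        ENNReal.ofReal_le_ofReal (div_le_div₀ (hαt.le.trans (hαM t)) (hαM t) hK hKt.le)

theorem withDensity_setOf_rightDeriv_lt_le :
    (volume.withDensity fun x => ENNReal.ofReal (α x)) {t ∈ interior {x | 0 < α x} | g t < -K}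
      ≤ ENNReal.ofReal (M / K) := by
  refine measure_le_of_forall_measure_Iic_le fun t ⟨ht, hKt⟩ => ?_
  have hαt : 0 < α t := interior_subset (s := {x | 0 < α x}) ht
  rw [withDensity_apply _ measurableSet_Iic]
  calc ∫⁻ x in Iic t, ENNReal.ofReal (α x) ≤ ENNReal.ofReal (α t / -g t) :=
        setLIntegral_Iic_le_of_le_mul_exp (by linarith) hαt.le
          (hlc.le_mul_exp_neg_mul_sub ht (hg t ht))
    _ ≤ ENNReal.ofReal (M / K) :=
        ENNReal.ofReal_le_ofReal
          (div_le_div₀ (hαt.le.trans (hαM t)) (hαM t) hK (le_neg_of_le_neg hKt.le))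

theorem withDensity_setOf_lt_deriv_le :
    (volume.withDensity fun x => ENNReal.ofReal (α x))
        {x ∈ {t ∈ interior {x | 0 < α x} | g t ∈ Icc (-K) K} | K ^ 2 < deriv g x}
      ≤ ENNReal.ofReal (2 * M / K) := by
  have hmono := hlc.convexOn_neg_log.monotoneOn_of_hasDerivWithinAt_Ioi hg
  have hs : {t ∈ interior {x | 0 < α x} | g t ∈ Icc (-K) K}.OrdConnected :=
    (hlc.convexOn_neg_log.1.ordConnected.interior).sep_of_monotoneOn ordConnected_Icc hmono
  calc _ ≤ ENNReal.ofReal M * ENNReal.ofReal ((K - -K) / K ^ 2) :=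
        (withDensity_ofReal_le_ofReal_mul_volume hαM _).trans (mul_le_mul_right
          (volume_setOf_lt_deriv_le_of_monotoneOn hs.measurableSet (hmono.mono (sep_subset _ _))
            (fun _ hx => hx.2) (by positivity)) _)
    _ = ENNReal.ofReal (2 * M / K) := by
        rw [← ENNReal.ofReal_mul' (div_nonneg (by linarith) (sq_nonneg K))]
        congr 1
        field_simp
        ring

theorem withDensity_setOf_sq_lt_deriv_le (hM : 0 ≤ M) :
    (volume.withDensity fun x => ENNReal.ofReal (α x))
        {x ∈ interior {x | 0 < α x} | K ^ 2 < deriv g x} ≤ ENNReal.ofReal (4 * M / K) := by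
  set J := interior {x | 0 < α x}
  have hcover : {x ∈ J | K ^ 2 < deriv g x} ⊆ {t ∈ J | K < g t} ∪ {t ∈ J | g t < -K} ∪
      {x ∈ {t ∈ J | g t ∈ Icc (-K) K} | K ^ 2 < deriv g x} := by
    rintro x ⟨hxJ, hx⟩
    by_cases hup : K < g x
    · exact Or.inl (Or.inl ⟨hxJ, hup⟩)
    by_cases hlow : g x < -K
    · exact Or.inl (Or.inr ⟨hxJ, hlow⟩)
    exact Or.inr ⟨⟨hxJ, not_lt.1 hlow, not_lt.1 hup⟩, hx⟩
  calc _ ≤ _ := (measure_mono hcover).trans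
        ((measure_union_le _ _).trans (add_le_add (measure_union_le _ _) le_rfl))
    _ ≤ ENNReal.ofReal (M / K) + ENNReal.ofReal (M / K) + ENNReal.ofReal (2 * M / K) := by
        gcongr
        · exact hlc.withDensity_setOf_lt_rightDeriv_le hg hαM hK
        · exact hlc.withDensity_setOf_rightDeriv_lt_le hg hαM hK
        · exact hlc.withDensity_setOf_lt_deriv_le hg hαM hK
    _ = ENNReal.ofReal (4 * M / K) := by
        rw [← ENNReal.ofReal_add (by positivity) (by positivity),
          ← ENNReal.ofReal_add (by positivity) (by positivity)]
        congr 1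
        ring

end IsLogConcave

theorem second_log_derivative_quantile_general
    (α g f'' : ℝ → ℝ) (M C : ℝ)
    (hlc : IsLogConcave α)
    -- `g` is the right derivative of `f = -log α` on `{α > 0}`
    (hg : ∀ x, 0 < α x →
      HasDerivWithinAt (fun y => - Real.log (α y)) (g x) (Set.Ioi x) x)
    -- `f''` is the derivative of `g`, which exists a.e. on `{α > 0}`
    (hf'' : ∀ᵐ x ∂(volume : Measure ℝ), 0 < α x → HasDerivAt g (f'' x) x)
    -- `M` is the maximal value of the density `α`
    (hM : IsGreatest (Set.range α) M)
    (hC : 4 ≤ C) :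
    (volume.withDensity fun x => ENNReal.ofReal (α x))
        {x : ℝ | (C * M) ^ 2 < f'' x} ≤ ENNReal.ofReal (4 / C) := by
  set μ := volume.withDensity fun x => ENNReal.ofReal (α x)
  set J := interior {x | 0 < α x}
  have hαM : ∀ x, α x ≤ M := fun x => hM.2 ⟨x, rfl⟩
  rcases le_or_gt M 0 with hM0 | hM0
  · calc μ _ ≤ ENNReal.ofReal M * volume _ := withDensity_ofReal_le_ofReal_mul_volume hαM _
      _ = 0 := by rw [ENNReal.ofReal_of_nonpos hM0, zero_mul]
      _ ≤ _ := zero_le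
  have hgJ : ∀ x ∈ J, HasDerivWithinAt (fun y => -Real.log (α y)) (g x) (Ioi x) x :=
    fun x hx => hg x (interior_subset (s := {x | 0 < α x}) hx)
  have hgood : ∀ᵐ x ∂μ, x ∈ J ∧ HasDerivAt g (f'' x) x := by
    filter_upwards [hlc.ae_withDensity_mem_interior,
      (withDensity_absolutelyContinuous _ _).ae_le hf''] with x hxJ hx
    exact ⟨hxJ, hx (interior_subset (s := {x | 0 < α x}) hxJ)⟩
  calc μ {x | (C * M) ^ 2 < f'' x} ≤ μ {x ∈ J | (C * M) ^ 2 < deriv g x} := by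
        refine measure_mono_ae ?_
        filter_upwards [hgood] with x ⟨hxJ, hx⟩ (hbig : (C * M) ^ 2 < f'' x)
        exact ⟨hxJ, hx.deriv ▸ hbig⟩
    _ ≤ ENNReal.ofReal (4 * M / (C * M)) :=
        hlc.withDensity_setOf_sq_lt_deriv_le hgJ hαM (by positivity) hM0.le
    _ = ENNReal.ofReal (4 / C) := by
        congr 1
        field_simp

/-- Let `ξ` be a real random variable with log-concave density `α = exp (-f)`,
`f` convex.  Let `g` be the right derivative of `f` on `I = {f < ∞} = {α > 0}`
and let `f''`, defined a.e. on `I`, be the derivative of `g`.  If `C ≥ 4` and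
`M = max α`, then `P (f''(ξ) > (C M)²) ≤ 4 / C`. -/
theorem second_log_derivative_quantile
    (α g f'' : ℝ → ℝ) (M C : ℝ)
    (hα : ∀ x, 0 ≤ α x) (hlc : IsLogConcave α)
    (hprob : ∫⁻ x : ℝ, ENNReal.ofReal (α x) = 1)
    -- `g` is the right derivative of `f = -log α` on `{α > 0}`
    (hg : ∀ x, 0 < α x →
      HasDerivWithinAt (fun y => - Real.log (α y)) (g x) (Set.Ioi x) x)
    -- `f''` is the derivative of `g`, which exists a.e. on `{α > 0}`
    (hf'' : ∀ᵐ x ∂(volume : Measure ℝ), 0 < α x → HasDerivAt g (f'' x) x)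
    -- `M` is the maximal value of the density `α`
    (hM : IsGreatest (Set.range α) M)
    (hC : 4 ≤ C) :
    (volume.withDensity fun x => ENNReal.ofReal (α x))
        {x : ℝ | (C * M) ^ 2 < f'' x} ≤ ENNReal.ofReal (4 / C) :=
  second_log_derivative_quantile_general α g f'' M C hlc hg hf'' hM hC
end

section
/- Let d ≥ 2 and L ≥ 1. There exists C > 1, depending only on d, such that for every vertex a ∈ V(Λ_L^d) and every integer m ≥ 1, the number of sets X ∈ 𝒞(Λ_L^d) with a ∈ X, |X| ≤ 3L^d/4 and |∂_{Λ_L^d} X| = m is at most C^m. -/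
/-- The box `Λ_L^d`: the graph on `{1,…,L}^d` (encoded as `Fin d → Fin L`)
with the nearest-neighbor adjacency of `ℤ^d`. -/
def boxGraph (d L : ℕ) : SimpleGraph (Fin d → Fin L) where
  Adj v w := ∃ j, (∀ i, i ≠ j → v i = w i) ∧
    ((v j : ℕ) + 1 = (w j : ℕ) ∨ (w j : ℕ) + 1 = (v j : ℕ))
  symm := by
    constructor
    rintro v w ⟨j, hj, h⟩
    exact ⟨j, fun i hi => (hj i hi).symm, h.symm⟩
  loopless := by
    constructor
    rintro v ⟨j, -, h⟩
    omega

open Classical in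
/-- `|∂_G X|`: the number of edges of `G` with exactly one endpoint in `X`,
counted as ordered pairs `(u, v)`, `u ∈ X`, `v ∉ X`, `u ~ v`. -/
noncomputable def bdryCard {V : Type*} [Fintype V] (G : SimpleGraph V)
    (X : Finset V) : ℕ :=
  (Finset.univ.filter fun p : V × V => G.Adj p.1 p.2 ∧ p.1 ∈ X ∧ p.2 ∉ X).card

/-- `X ∈ 𝒞(G)`: `X ∉ {∅, V(G)}` and both induced subgraphs `G|_X` and
`G|_{V(G) \ X}` are connected. -/
def memC {V : Type*} [Fintype V] (G : SimpleGraph V) (X : Finset V) : Prop :=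
  X.Nonempty ∧ X ≠ Finset.univ ∧
    (SimpleGraph.induce (X : Set V) G).Connected ∧
    (SimpleGraph.induce ((X : Set V)ᶜ) G).Connected

/-!
A connected set `X` is determined by one of its points `a` and its edge boundary, so it suffices
to count boundaries. By Timár's argument, which rests on the box being simply connected (every
`ℤ/2`-cocycle is a coboundary), the boundary of `X ∈ 𝒞(Λ)` is connected for the relation "lie on
a common unit square", whose degree is at most `9^d`. If moreover `|X| ≤ 3L^d/4` and `|∂X| = m`,
some boundary edge lies within distance `8dm` of `a`: otherwise `X` would contain a large cube,
and sweeping it along lines would make `X` too big. The boundary is thus a connected set of `m`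
vertices through one of `O(m)^{2d}` roots in a graph of bounded degree, and there are at most
`(9^d + 1)^{2m}` such sets for each root.
-/

open Finset

namespace SimpleGraph

variable {V : Type*} {G : SimpleGraph V}

theorem exists_adj_of_preconnected_induce {S : Set V} (hS : (G.induce S).Preconnected)
    {P : V → Prop} {x y : V} (hx : x ∈ S) (hy : y ∈ S) (hPx : P x) (hPy : ¬P y) :
    ∃ u v, G.Adj u v ∧ u ∈ S ∧ v ∈ S ∧ P u ∧ ¬P v := by
  obtain ⟨p⟩ := hS ⟨x, hx⟩ ⟨y, hy⟩
  obtain ⟨⟨⟨u, v⟩, huv⟩, -, hu, hv⟩ := p.exists_boundary_dart {z | P z.1} hPx hPy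
  exact ⟨u, v, huv, u.2, v.2, hu, hv⟩

theorem connected_induce_of_forall_closed {S : Set V} {x : V} (hx : x ∈ S)
    (h : ∀ A ⊆ S, x ∈ A → (∀ u ∈ A, ∀ v ∈ S, G.Adj u v → v ∈ A) → S ⊆ A) :
    (G.induce S).Connected := by
  rw [connected_iff_exists_forall_reachable]
  refine ⟨⟨x, hx⟩, fun ⟨y, hy⟩ => ?_⟩
  exact (h {z | ∃ hz : z ∈ S, (G.induce S).Reachable ⟨x, hx⟩ ⟨z, hz⟩} (fun z hz => hz.1)
    ⟨hx, .rfl⟩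
    (fun u ⟨_, hxu⟩ v hv huv => ⟨hv, hxu.trans (Adj.reachable (by simpa using huv))⟩) hy).2

theorem apply_eq_of_preconnected_induce {β : Type*} {S : Set V}
    (hS : (G.induce S).Preconnected) {f : V → β}
    (hf : ∀ u v, G.Adj u v → u ∈ S → v ∈ S → f u = f v) {x y : V} (hx : x ∈ S) (hy : y ∈ S) :
    f x = f y := by
  by_contra hxy
  obtain ⟨u, v, huv, hu, hv, hfu, hfv⟩ :=
    exists_adj_of_preconnected_induce hS (P := (f · = f x)) hx hy rfl (Ne.symm hxy)
  exact hfv (hf u v huv hu hv ▸ hfu)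

section EdgeBoundary

variable [Fintype V]

open Classical in
noncomputable def edgeBoundary (G : SimpleGraph V) (X : Finset V) : Finset (V × V) :=
  univ.filter fun p => G.Adj p.1 p.2 ∧ p.1 ∈ X ∧ p.2 ∉ X

theorem bdryCard_eq_card_edgeBoundary (X : Finset V) : bdryCard G X = #(G.edgeBoundary X) :=
  rfl

theorem mem_edgeBoundary {X : Finset V} {p : V × V} :
    p ∈ G.edgeBoundary X ↔ G.Adj p.1 p.2 ∧ p.1 ∈ X ∧ p.2 ∉ X := by
  classical
  simp [edgeBoundary]

theorem subset_of_edgeBoundary_eq {X Y : Finset V} {a : V} (haX : a ∈ X) (haY : a ∈ Y)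
    (hX : (G.induce (X : Set V)).Preconnected) (h : G.edgeBoundary X = G.edgeBoundary Y) :
    X ⊆ Y := by
  intro u hu
  by_contra huY
  obtain ⟨p, q, hpq, -, hqX, hpY, hqY⟩ :=
    exists_adj_of_preconnected_induce hX (P := (· ∈ Y)) haX hu haY huY
  have hpq : (p, q) ∈ G.edgeBoundary X := h ▸ mem_edgeBoundary.2 ⟨hpq, hpY, hqY⟩
  exact (mem_edgeBoundary.1 hpq).2.2 hqX

theorem eq_of_edgeBoundary_eq {X Y : Finset V} {a : V} (haX : a ∈ X) (haY : a ∈ Y)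
    (hX : (G.induce (X : Set V)).Preconnected) (hY : (G.induce (Y : Set V)).Preconnected)
    (h : G.edgeBoundary X = G.edgeBoundary Y) : X = Y :=
  (subset_of_edgeBoundary_eq haX haY hX h).antisymm (subset_of_edgeBoundary_eq haY haX hY h.symm)

end EdgeBoundary

section CountingConnectedSets

variable {W : Type*} [DecidableEq W] (H : SimpleGraph W)

/-- Grown one vertex at a time, each new vertex `v` entering through a detour `u, v, u`. -/
theorem exists_chain_toFinset_eq {S : Finset W} {r : W} (hr : r ∈ S)
    (hS : (H.induce (S : Set W)).Connected) :
    ∃ l : List W, l.IsChain H.Adj ∧ l.head? = some r ∧ l.toFinset = S ∧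
      l.length ≤ 2 * #S - 1 := by
  suffices ∀ k, 1 ≤ k → k ≤ #S → ∃ l : List W, l.IsChain H.Adj ∧ l.head? = some r ∧
      l.toFinset ⊆ S ∧ #l.toFinset = k ∧ l.length ≤ 2 * k - 1 by
    obtain ⟨l, hc, hh, hsub, hcard, hlen⟩ := this #S (card_pos.2 ⟨r, hr⟩) le_rfl
    exact ⟨l, hc, hh, eq_of_subset_of_card_le hsub hcard.ge, hcard ▸ hlen⟩
  intro k hk
  induction k, hk using Nat.le_induction with
  | base => exact fun _ => ⟨[r], List.isChain_singleton _, rfl, by simpa using hr, rfl, le_rfl⟩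
  | succ k hk ih =>
    intro hkS
    obtain ⟨l, hc, hh, hsub, hcard, hlen⟩ := ih (by omega)
    obtain ⟨y, hyS, hyl⟩ : ∃ y ∈ S, y ∉ l.toFinset :=
      not_subset.1 fun h => by have := card_le_card h; omega
    have hrl : r ∈ l.toFinset := List.mem_toFinset.2 (List.mem_of_mem_head? hh)
    obtain ⟨u, v, huv, -, hvS, hul, hvl⟩ := exists_adj_of_preconnected_induce hS.preconnected
      (P := (· ∈ l.toFinset)) (hsub hrl) hyS hrl hyl
    obtain ⟨l₁, l₂, rfl⟩ := List.append_of_mem (List.mem_toFinset.1 hul)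
    have hspliced :
        (l₁ ++ u :: v :: u :: l₂).toFinset = insert v (l₁ ++ u :: l₂).toFinset := by
      ext z
      simp only [List.toFinset_append, List.toFinset_cons, mem_union, mem_insert]
      tauto
    refine ⟨l₁ ++ u :: v :: u :: l₂, ?_, ?_, ?_, ?_, ?_⟩
    · rw [List.isChain_append] at hc ⊢
      refine ⟨hc.1, ?_, by simpa using hc.2.2⟩
      exact List.isChain_cons_cons.2 ⟨huv, List.isChain_cons_cons.2 ⟨huv.symm, hc.2.1⟩⟩
    · cases l₁ <;> simpa using hh
    · rw [hspliced]
      exact insert_subset hvS hsub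
    · rw [hspliced, card_insert_of_notMem hvl, hcard]
    · simp only [List.length_append, List.length_cons] at hlen ⊢
      omega

variable [Fintype W] [DecidableRel H.Adj]

def chainsFrom : ℕ → W → Finset (List W)
  | 0, v => {[v]}
  | n + 1, v =>
    insert [v] ((H.neighborFinset v).biUnion fun w => (chainsFrom n w).image (List.cons v))

theorem card_chainsFrom_le {Δ : ℕ} (hΔ : ∀ w, H.degree w ≤ Δ) :
    ∀ n v, #(chainsFrom H n v) ≤ (Δ + 1) ^ n
  | 0, v => by simp [chainsFrom]
  | n + 1, v =>
    calc #(chainsFrom H (n + 1) v)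
        ≤ 1 + ∑ w ∈ H.neighborFinset v, #((chainsFrom H n w).image (List.cons v)) :=
          (card_insert_le _ _).trans <| by
            rw [add_comm]; exact Nat.add_le_add_left card_biUnion_le 1
      _ ≤ 1 + ∑ _w ∈ H.neighborFinset v, (Δ + 1) ^ n :=
          Nat.add_le_add_left (sum_le_sum fun w _ =>
            card_image_le.trans (card_chainsFrom_le hΔ n w)) 1
      _ = 1 + H.degree v * (Δ + 1) ^ n := by
          rw [sum_const, smul_eq_mul, card_neighborFinset_eq_degree]
      _ ≤ (Δ + 1) ^ n + Δ * (Δ + 1) ^ n :=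
          Nat.add_le_add (Nat.one_le_pow _ _ (Nat.succ_pos Δ)) (Nat.mul_le_mul_right _ (hΔ v))
      _ = (Δ + 1) ^ (n + 1) := by ring

theorem mem_chainsFrom : ∀ {n : ℕ} {v : W} {l : List W}, l.IsChain H.Adj → l.head? = some v →
    l.length ≤ n + 1 → l ∈ chainsFrom H n v
  | n, v, [w], _, hh, _ => by cases n <;> simp_all [chainsFrom]
  | n + 1, v, u :: w :: l, hc, hh, hlen => by
    obtain rfl : u = v := by simpa using hh
    rw [List.isChain_cons_cons] at hc
    simp only [chainsFrom, mem_insert, mem_biUnion, mem_neighborFinset, mem_image]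
    exact Or.inr ⟨w, hc.1, w :: l, mem_chainsFrom hc.2 rfl (by simpa using hlen), rfl⟩
  | _, _, [], _, hh, _ | 0, _, _ :: _ :: _, _, _, hlen => by simp_all

open Classical in
theorem card_connected_finsets_le {Δ : ℕ} (hΔ : ∀ w, H.degree w ≤ Δ) (r : W) (q : ℕ) :
    #{S : Finset W | r ∈ S ∧ (H.induce (S : Set W)).Connected ∧ #S = q} ≤
      (Δ + 1) ^ (2 * q) := by
  have hchain : ∀ S ∈ ({S : Finset W | r ∈ S ∧ (H.induce (S : Set W)).Connected ∧ #S = q} :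
      Finset (Finset W)), ∃ l ∈ chainsFrom H (2 * q) r, l.toFinset = S := by
    intro S hS
    obtain ⟨hr, hconn, rfl⟩ := (mem_filter.1 hS).2
    obtain ⟨l, hc, hh, hl, hlen⟩ := H.exists_chain_toFinset_eq hr hconn
    exact ⟨l, mem_chainsFrom H hc hh (by omega), hl⟩
  calc _ ≤ #((chainsFrom H (2 * q) r).image List.toFinset) := card_le_card fun S hS => by
        obtain ⟨l, hl, rfl⟩ := hchain S hS
        exact mem_image_of_mem _ hl
    _ ≤ #(chainsFrom H (2 * q) r) := card_image_le
    _ ≤ (Δ + 1) ^ (2 * q) := card_chainsFrom_le H hΔ _ r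

end CountingConnectedSets

end SimpleGraph

section Staircase

variable {d L : ℕ}

/-- `v = u + e_i`. -/
def IsUnitStep (i : Fin d) (u v : Fin d → Fin L) : Prop :=
  (∀ k, k ≠ i → u k = v k) ∧ (v i : ℕ) = u i + 1

/-- The corners `u`, `u + e_i`, `u + e_j`, `u + e_i + e_j` of a unit square. -/
def IsUnitSquare (u u' w w' : Fin d → Fin L) : Prop :=
  ∃ i j, i ≠ j ∧ IsUnitStep i u u' ∧ IsUnitStep j u w ∧ IsUnitStep j u' w'

theorem boxGraph_adj_iff {u v : Fin d → Fin L} :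
    (boxGraph d L).Adj u v ↔ ∃ i, IsUnitStep i u v ∨ IsUnitStep i v u := by
  constructor
  · rintro ⟨i, hi, h | h⟩
    exacts [⟨i, Or.inl ⟨hi, h.symm⟩⟩, ⟨i, Or.inr ⟨fun k hk => (hi k hk).symm, h.symm⟩⟩]
  · rintro ⟨i, ⟨hi, h⟩ | ⟨hi, h⟩⟩
    exacts [⟨i, hi, Or.inl h.symm⟩, ⟨i, fun k hk => (hi k hk).symm, Or.inr h.symm⟩]

theorem IsUnitSquare.isUnitStep_opposite {u u' w w' : Fin d → Fin L}
    (h : IsUnitSquare u u' w w') : ∃ i, IsUnitStep i w w' := by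
  obtain ⟨i, j, hij, ⟨hu, hu'⟩, ⟨hw, hw'⟩, ⟨hw₂, hw₂'⟩⟩ := h
  refine ⟨i, fun k hk => Fin.ext ?_, ?_⟩
  · by_cases hkj : k = j
    · subst hkj
      have := congrArg Fin.val (hu k hk)
      omega
    · rw [← hw k hkj, ← hw₂ k hkj, hu k hk]
  · have := congrArg Fin.val (hw i hij)
    have := congrArg Fin.val (hw₂ i hij)
    omega

theorem IsUnitStep.apply_eq_of_lt {x y : Fin d → Fin L} {j : Fin d} (hxy : IsUnitStep j x y)
    {i : Fin d} {k : ℕ} (hk : k ≤ j) (hi : (i : ℕ) < k) : x i = y i :=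
  hxy.1 i (Fin.ne_of_lt (Fin.lt_def.2 (by omega)))

variable {G : Type*} [AddCommGroup G] (χ : (Fin d → Fin L) → (Fin d → Fin L) → G)

def IsCocycle : Prop :=
  ∀ u u' w w', IsUnitSquare u u' w w' → χ u u' + χ u' w' = χ u w + χ w w'

variable [NeZero L]

/-- As `t` runs from `0` to `x k`, `sweep x k t` runs along the `k`-th leg of the staircase path
from `0` to `x` that raises the coordinates one after the other. -/
def sweep (x : Fin d → Fin L) (k t : ℕ) : Fin d → Fin L :=
  fun i => if (i : ℕ) < k then x i else if (i : ℕ) = k then Fin.ofNat L t else 0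

theorem sweep_dim (x : Fin d → Fin L) : sweep x d 0 = x :=
  funext fun i => if_pos i.isLt

theorem sweep_self (x : Fin d → Fin L) (k : Fin d) : sweep x k (x k) = sweep x (k + 1) 0 := by
  funext i
  simp only [sweep]
  rcases lt_trichotomy (i : ℕ) k with h | h | h
  · simp [h, h.trans (Nat.lt_succ_self _)]
  · obtain rfl : i = k := Fin.ext h
    simp
  · simp [h.ne', h.not_gt, show ¬ (i : ℕ) < k + 1 by omega]

theorem sweep_congr {x y : Fin d → Fin L} {k : ℕ} (h : ∀ i : Fin d, (i : ℕ) < k → x i = y i)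
    (t : ℕ) : sweep x k t = sweep y k t := by
  funext i
  simp only [sweep]
  split_ifs with hi
  · exact h i hi
  all_goals rfl

theorem isUnitSquare_sweep {x y : Fin d → Fin L} {j k : Fin d} (hjk : j < k)
    (hxy : IsUnitStep j x y) {t : ℕ} (ht : t + 1 < L) :
    IsUnitSquare (sweep x k t) (sweep x k (t + 1)) (sweep y k t) (sweep y k (t + 1)) := by
  have hk : ∀ s, IsUnitStep j (sweep x k s) (sweep y k s) := by
    refine fun s => ⟨fun i hi => ?_, ?_⟩
    · simp only [sweep]
      split_ifs <;> simp [hxy.1 i hi]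
    · simp [sweep, hjk, hxy.2]
  refine ⟨k, j, hjk.ne', ⟨fun i hi => ?_, ?_⟩, hk t, hk (t + 1)⟩
  · simp [sweep, Fin.val_ne_of_ne hi]
  · simp [sweep, Nat.mod_eq_of_lt ht, Nat.mod_eq_of_lt (Nat.lt_of_succ_lt ht)]

def legSum (x : Fin d → Fin L) (k : Fin d) : G :=
  ∑ t ∈ range (x k), χ (sweep x k t) (sweep x k (t + 1))

def staircaseSum (x : Fin d → Fin L) : G :=
  ∑ k, legSum χ x k

variable {χ} {x y : Fin d → Fin L} {j : Fin d}

theorem legSum_eq_of_lt (hxy : IsUnitStep j x y) {k : Fin d} (hk : k < j) :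
    legSum χ y k = legSum χ x k := by
  simp only [legSum, hxy.1 k hk.ne, sweep_congr fun i hi => hxy.apply_eq_of_lt hk.le hi]

theorem legSum_self (hxy : IsUnitStep j x y) :
    legSum χ y j = legSum χ x j + χ (sweep x (j + 1) 0) (sweep y (j + 1) 0) := by
  have hsweep : ∀ t, sweep y j t = sweep x j t :=
    sweep_congr fun i hi => (hxy.apply_eq_of_lt le_rfl hi).symm
  calc legSum χ y j = ∑ t ∈ range (x j + 1), χ (sweep x j t) (sweep x j (t + 1)) := by
        simp only [legSum, hxy.2, hsweep]
    _ = legSum χ x j + χ (sweep x j (x j)) (sweep y j (y j)) := by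
        rw [sum_range_succ, hxy.2, hsweep]; rfl
    _ = legSum χ x j + χ (sweep x (j + 1) 0) (sweep y (j + 1) 0) := by
        rw [sweep_self, sweep_self]

theorem legSum_sub_of_gt (hχ : IsCocycle χ) (hxy : IsUnitStep j x y) {k : Fin d} (hk : j < k) :
    legSum χ y k - legSum χ x k =
      χ (sweep x (k + 1) 0) (sweep y (k + 1) 0) - χ (sweep x k 0) (sweep y k 0) := by
  have hxk : y k = x k := (hxy.1 k hk.ne').symm
  rw [legSum, legSum, hxk, ← sum_sub_distrib, ← sweep_self, ← sweep_self, hxk]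
  rw [← sum_range_sub (fun t => χ (sweep x k t) (sweep y k t))]
  refine sum_congr rfl fun t ht => ?_
  have ht : t + 1 < L := by have := (x k).isLt; rw [mem_range] at ht; omega
  rw [sub_eq_sub_iff_add_eq_add, add_comm, ← hχ _ _ _ _ (isUnitSquare_sweep hk hxy ht),
    add_comm]

/-- Cocycles are coboundaries, the box being simply connected. The staircases to `x` and to
`y = x + e_j` share their legs before `j`; leg `j` of the second is one step longer, and beyond
`j` the two run parallel at distance one, so their difference telescopes across unit squares. -/
theorem staircaseSum_add_of_isUnitStep (hχ : IsCocycle χ) (hxy : IsUnitStep j x y) :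
    staircaseSum χ x + χ x y = staircaseSum χ y := by
  set F : ℕ → G := fun k => if k ≤ j then 0 else χ (sweep x k 0) (sweep y k 0)
  have hleg : ∀ k : Fin d, legSum χ y k - legSum χ x k = F (k + 1) - F k := by
    intro k
    rcases lt_trichotomy k j with hk | rfl | hk
    · rw [legSum_eq_of_lt hxy hk, sub_self]
      simp [F, show (k : ℕ) + 1 ≤ j from hk, hk.le]
    · simp [F, legSum_self hxy]
    · rw [legSum_sub_of_gt hχ hxy hk]
      simp [F, show ¬ (k : ℕ) + 1 ≤ j by omega, show ¬ (k : ℕ) ≤ j by omega]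
  have hsum : staircaseSum χ y - staircaseSum χ x = χ x y := by
    rw [staircaseSum, staircaseSum, ← sum_sub_distrib, sum_congr rfl fun k _ => hleg k,
      Fin.sum_univ_eq_sum_range (fun k => F (k + 1) - F k), sum_range_sub]
    simp [F, not_le.2 j.isLt, sweep_dim]
  rw [← hsum]
  abel

end Staircase

section EdgeIndicator

variable {V : Type*}

open Classical in
noncomputable def edgeIndicator (A : Set (V × V)) (u v : V) : ZMod 2 :=
  if (u, v) ∈ A ∨ (v, u) ∈ A then 1 else 0

theorem edgeIndicator_comm (A : Set (V × V)) (u v : V) :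
    edgeIndicator A u v = edgeIndicator A v u := by
  classical
  exact if_congr or_comm rfl rfl

theorem edgeIndicator_edgeBoundary [Fintype V] [DecidableEq V] {G : SimpleGraph V}
    {X : Finset V} {u v : V} (huv : G.Adj u v) :
    edgeIndicator (G.edgeBoundary X : Set (V × V)) u v =
      (if u ∈ X then 1 else 0) + (if v ∈ X then 1 else 0) := by
  by_cases hu : u ∈ X <;> by_cases hv : v ∈ X <;>
    simp [edgeIndicator, SimpleGraph.mem_edgeBoundary, huv, huv.symm, hu, hv]
  decide

end EdgeIndicator

section Timar

variable {d L : ℕ}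

open SimpleGraph

def plaquetteGraph (d L : ℕ) : SimpleGraph ((Fin d → Fin L) × (Fin d → Fin L)) :=
  SimpleGraph.fromRel fun p q => ∃ u u' w w', IsUnitSquare u u' w w' ∧
    ({p.1, p.2, q.1, q.2} : Set (Fin d → Fin L)) ⊆ {u, u', w, w'}

/-- A unit square has either all or none of its boundary edges in `A`. In the first case
`edgeIndicator A` agrees on it with the indicator of the boundary, the coboundary of the
indicator of `X`. -/
theorem isCocycle_edgeIndicator {X : Finset (Fin d → Fin L)}
    {A : Set ((Fin d → Fin L) × (Fin d → Fin L))} (hAD : A ⊆ (boxGraph d L).edgeBoundary X)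
    (hA : ∀ p ∈ A, ∀ q ∈ (boxGraph d L).edgeBoundary X, (plaquetteGraph d L).Adj p q → q ∈ A) :
    IsCocycle (edgeIndicator A) := by
  intro u u' w w' hsq
  set Q : Set (Fin d → Fin L) := {u, u', w, w'}
  have hQ : u ∈ Q ∧ u' ∈ Q ∧ w ∈ Q ∧ w' ∈ Q := by simp [Q]
  by_cases hmeet : ∃ p ∈ A, p.1 ∈ Q ∧ p.2 ∈ Q
  · obtain ⟨p, hpA, hp⟩ := hmeet
    have hmem : ∀ q : (Fin d → Fin L) × (Fin d → Fin L), q.1 ∈ Q → q.2 ∈ Q →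
        (q ∈ A ↔ q ∈ (boxGraph d L).edgeBoundary X) := by
      refine fun q hq₁ hq₂ => ⟨fun h => hAD h, fun hq => ?_⟩
      by_cases hpq : p = q
      · exact hpq ▸ hpA
      refine hA p hpA q hq ((fromRel_adj _ _ _).2 ⟨hpq, Or.inl ⟨u, u', w, w', hsq, ?_⟩⟩)
      simp only [Set.insert_subset_iff, Set.singleton_subset_iff]
      exact ⟨hp.1, hp.2, hq₁, hq₂⟩
    have hside : ∀ s t, s ∈ Q → t ∈ Q → (boxGraph d L).Adj s t →
        edgeIndicator A s t = (if s ∈ X then 1 else 0) + (if t ∈ X then 1 else 0) := by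
      intro s t hs ht hst
      rw [← edgeIndicator_edgeBoundary hst]
      simp only [edgeIndicator, hmem (s, t) hs ht, hmem (t, s) ht hs, mem_coe]
    obtain ⟨k, hk⟩ := hsq.isUnitStep_opposite
    obtain ⟨i, j, -, hu', hw, hw'⟩ := hsq
    rw [hside u u' hQ.1 hQ.2.1 (boxGraph_adj_iff.2 ⟨i, .inl hu'⟩),
      hside u' w' hQ.2.1 hQ.2.2.2 (boxGraph_adj_iff.2 ⟨j, .inl hw'⟩),
      hside u w hQ.1 hQ.2.2.1 (boxGraph_adj_iff.2 ⟨j, .inl hw⟩),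
      hside w w' hQ.2.2.1 hQ.2.2.2 (boxGraph_adj_iff.2 ⟨k, .inl hk⟩)]
    generalize (if u ∈ X then (1 : ZMod 2) else 0) = a
    generalize (if u' ∈ X then (1 : ZMod 2) else 0) = b
    generalize (if w ∈ X then (1 : ZMod 2) else 0) = c
    generalize (if w' ∈ X then (1 : ZMod 2) else 0) = e
    revert a b c e
    decide
  · have hzero : ∀ s t, s ∈ Q → t ∈ Q → edgeIndicator A s t = 0 := fun s t hs ht => by
      rw [edgeIndicator, if_neg]
      rintro (h | h)
      exacts [hmeet ⟨_, h, hs, ht⟩, hmeet ⟨_, h, ht, hs⟩]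
    rw [hzero u u' hQ.1 hQ.2.1, hzero u' w' hQ.2.1 hQ.2.2.2, hzero u w hQ.1 hQ.2.2.1,
      hzero w w' hQ.2.2.1 hQ.2.2.2]

/-- Timár's argument: if a plaquette-closed set `A` of boundary edges missed the boundary edge
`f`, the indicator of `A` would be the coboundary of a function that is constant on the connected
sets `X` and `Xᶜ`, so it would take the same value on `e ∈ A` and on `f`. -/
theorem connected_induce_edgeBoundary [NeZero L] {X : Finset (Fin d → Fin L)}
    (hX : ((boxGraph d L).induce (X : Set (Fin d → Fin L))).Preconnected)
    (hXc : ((boxGraph d L).induce (X : Set (Fin d → Fin L))ᶜ).Preconnected)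
    {e : (Fin d → Fin L) × (Fin d → Fin L)} (he : e ∈ (boxGraph d L).edgeBoundary X) :
    ((plaquetteGraph d L).induce ((boxGraph d L).edgeBoundary X : Set _)).Connected := by
  classical
  refine connected_induce_of_forall_closed he fun A hAD heA hA f hf => ?_
  by_contra hfA
  obtain ⟨g, hg⟩ : ∃ g : (Fin d → Fin L) → ZMod 2,
      ∀ u v, (boxGraph d L).Adj u v → g u + g v = edgeIndicator A u v := by
    have hcoc := isCocycle_edgeIndicator hAD hA
    refine ⟨staircaseSum (edgeIndicator A), fun u v huv => ?_⟩
    obtain ⟨i, h | h⟩ := boxGraph_adj_iff.1 huv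
    · rw [← staircaseSum_add_of_isUnitStep hcoc h, CharTwo.add_cancel_left]
    · rw [← staircaseSum_add_of_isUnitStep hcoc h, add_comm, CharTwo.add_cancel_left,
        edgeIndicator_comm]
  have hg_eq : ∀ u v, (boxGraph d L).Adj u v → (u ∈ X ↔ v ∈ X) → g u = g v := by
    intro u v huv huvX
    refine CharTwo.add_eq_zero.1 ((hg u v huv).trans (if_neg ?_))
    rintro (h | h) <;> have := mem_edgeBoundary.1 (hAD h) <;> tauto
  obtain ⟨headj, he₁, he₂⟩ := mem_edgeBoundary.1 he
  obtain ⟨hfadj, hf₁, hf₂⟩ := mem_edgeBoundary.1 hf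
  have hX₁ : g f.1 = g e.1 := apply_eq_of_preconnected_induce hX
    (fun u v huv hu hv => hg_eq u v huv (by simp_all)) hf₁ he₁
  have hX₂ : g f.2 = g e.2 := apply_eq_of_preconnected_induce hXc
    (fun u v huv hu hv => hg_eq u v huv (by simp_all)) hf₂ he₂
  have hAe : edgeIndicator A e.1 e.2 = 1 := if_pos (Or.inl heA)
  have hAf : edgeIndicator A f.1 f.2 = 0 := if_neg <| by
    rintro (h | h)
    exacts [hfA h, (mem_edgeBoundary.1 (hAD h)).2.2 hf₁]
  rw [← hg _ _ hfadj, hX₁, hX₂, hg _ _ headj, hAe] at hAf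
  exact one_ne_zero hAf

end Timar

section SubBox

variable {d L : ℕ}

open SimpleGraph

theorem preconnected_induce_subbox (lo hi : Fin d → ℕ) :
    ((boxGraph d L).induce {v | ∀ i, lo i ≤ v i ∧ (v i : ℕ) ≤ hi i}).Preconnected := by
  set B : Set (Fin d → Fin L) := {v | ∀ i, lo i ≤ v i ∧ (v i : ℕ) ≤ hi i}
  rintro ⟨u, hu⟩ ⟨v, hv⟩
  set δ : (Fin d → Fin L) → ℕ := fun w => ∑ i, (((w i : ℕ) - v i) + ((v i : ℕ) - w i))
  induction hδ : δ u using Nat.strong_induction_on generalizing u with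
  | _ n ih =>
    by_cases huv : u = v
    · subst huv; rfl
    obtain ⟨i, hi⟩ : ∃ i, u i ≠ v i := Function.ne_iff.1 huv
    obtain ⟨c, hcL, hstep, hc⟩ : ∃ c < L, ((u i : ℕ) + 1 = c ∨ c + 1 = u i) ∧
        ((c - v i) + ((v i : ℕ) - c)) + 1 = ((u i : ℕ) - v i) + ((v i : ℕ) - u i) := by
      rcases Nat.lt_or_gt_of_ne (Fin.val_ne_of_ne hi) with h | h
      · exact ⟨u i + 1, by omega, .inl rfl, by omega⟩
      · exact ⟨u i - 1, by omega, .inr (by omega), by omega⟩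
    set u' := Function.update u i ⟨c, hcL⟩
    have hu' : u' ∈ B := fun k => by
      by_cases hk : k = i
      · subst hk; have := hu k; have := hv k; simp only [u', Function.update_self]; omega
      · simp only [u', Function.update_of_ne hk]; exact hu k
    have hadj : (boxGraph d L).Adj u u' :=
      ⟨i, fun k hk => (Function.update_of_ne hk _ _).symm, by simp [u', hstep]⟩
    have hδ' : δ u' < n := by
      rw [← hδ]
      simp only [δ, ← add_sum_erase _ _ (mem_univ i), u', Function.update_self]
      rw [sum_congr rfl fun k hk => by rw [Function.update_of_ne (ne_of_mem_erase hk)]]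
      omega
    exact (Adj.reachable (G := (boxGraph d L).induce B) (u := ⟨u, hu⟩) (v := ⟨u', hu'⟩)
      hadj).trans (ih _ hδ' u' hu' rfl)

end SubBox

section Slab

variable {d L : ℕ}

open SimpleGraph

def slab (lo : Fin d → ℕ) (ρ n : ℕ) : Finset (Fin d → Fin L) :=
  univ.filter fun v => ∀ i : Fin d, (i : ℕ) < n → lo i ≤ v i ∧ (v i : ℕ) ≤ lo i + ρ

theorem slab_zero (lo : Fin d → ℕ) (ρ : ℕ) : slab (L := L) lo ρ 0 = univ := by
  simp [slab]

theorem card_slab_dim {lo : Fin d → ℕ} {ρ : ℕ} (hlo : ∀ i, lo i + ρ < L) :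
    #(slab (L := L) lo ρ d) = (ρ + 1) ^ d := by
  have hwin : ∀ i, (univ.filter fun t : Fin L => lo i ≤ t ∧ (t : ℕ) ≤ lo i + ρ) =
      (Icc (lo i) (lo i + ρ)).attachFin fun m hm => by have := hlo i; simp at hm; omega := by
    intro i; ext t; simp
  have : slab (L := L) lo ρ d =
      Fintype.piFinset fun i => univ.filter fun t : Fin L => lo i ≤ t ∧ (t : ℕ) ≤ lo i + ρ := by
    ext v; simp [slab]
  simp [this, hwin, add_assoc]

variable [NeZero L]

/-- The fibres of `lineProj j` are the lines in direction `j`. -/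
def lineProj (j : Fin d) (v : Fin d → Fin L) : Fin d → Fin L :=
  Function.update v j 0

theorem card_lineProj_fiber {j : Fin d} {y : Fin d → Fin L} (hy : y j = 0) :
    #(univ.filter fun v => lineProj j v = y) = L := by
  have : (univ.filter fun v => lineProj j v = y) = univ.image (Function.update y j) := by
    ext v
    simp only [mem_filter, mem_univ, true_and, mem_image]
    constructor
    · rintro rfl; exact ⟨v j, by simp [lineProj]⟩
    · rintro ⟨t, rfl⟩; rw [lineProj, Function.update_idem, ← hy, Function.update_eq_self]
  rw [this, card_image_of_injective _ (Function.update_injective y j), card_univ,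
    Fintype.card_fin]

theorem lineProj_eq_lineProj_iff {j : Fin d} {v w : Fin d → Fin L} :
    lineProj j v = lineProj j w ↔ ∀ i, i ≠ j → v i = w i := by
  simp only [lineProj, funext_iff, Function.update_apply]
  exact forall_congr' fun i => by by_cases h : i = j <;> simp [h]

theorem preconnected_induce_lineProj_fiber (j : Fin d) (y : Fin d → Fin L) :
    ((boxGraph d L).induce {v | lineProj j v = lineProj j y}).Preconnected := by
  have : {v | lineProj j v = lineProj j y} = {v : Fin d → Fin L | ∀ i,
      (if i = j then 0 else y i : ℕ) ≤ v i ∧ (v i : ℕ) ≤ if i = j then L - 1 else y i} := by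
    ext v
    simp only [Set.mem_ofPred_eq, lineProj_eq_lineProj_iff]
    refine forall_congr' fun i => ?_
    by_cases h : i = j
    · simp [h, Nat.le_sub_one_of_lt (v j).isLt]
    · simp [h, le_antisymm_iff, and_comm]
  rw [this]
  exact preconnected_induce_subbox _ _

/-- The lines in direction `n` through `X ∩ slab (n + 1)` meet that slab in at most `ρ + 1`
points each; those not contained in `X` carry a boundary edge, the others lie in `X ∩ slab n`. -/
theorem card_inter_slab_step (X : Finset (Fin d → Fin L)) (lo : Fin d → ℕ) (ρ : ℕ) {n : ℕ}
    (hn : n < d) :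
    (L : ℝ) * (#(X ∩ slab lo ρ (n + 1)) / (ρ + 1) - #((boxGraph d L).edgeBoundary X)) ≤
      #(X ∩ slab lo ρ n) := by
  set j : Fin d := ⟨n, hn⟩
  set S := X ∩ slab lo ρ (n + 1)
  set lines := S.image (lineProj j)
  set good := lines.filter fun y => ∀ v, lineProj j v = y → v ∈ X
  set bad := lines.filter fun y => ¬∀ v, lineProj j v = y → v ∈ X
  have hS : #S ≤ (ρ + 1) * #lines := by
    refine card_le_mul_card_image S (ρ + 1) fun y _ => ?_
    calc #(S.filter fun v => lineProj j v = y) ≤ #(Icc (lo j) (lo j + ρ)) := by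
          refine card_le_card_of_injOn (fun v => (v j : ℕ)) (fun v hv => ?_)
            (fun v hv w hw hvw => ?_)
          · simp only [S, slab, coe_filter, mem_inter, mem_filter, mem_univ, true_and,
              Set.mem_ofPred_eq] at hv
            simpa using hv.1.2 j (Nat.lt_succ_self n)
          · simp only [coe_filter, Set.mem_ofPred_eq] at hv hw
            have := lineProj_eq_lineProj_iff.1 (hv.2.trans hw.2.symm)
            funext i
            by_cases hij : i = j
            · exact hij ▸ Fin.ext hvw
            · exact this i hij
      _ = ρ + 1 := by simp [add_assoc]
  have hbad : #bad ≤ #((boxGraph d L).edgeBoundary X) := by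
    refine (card_le_card fun y hy => ?_).trans (card_image_le (f := fun p => lineProj j p.1))
    obtain ⟨hy, hyX⟩ := mem_filter.1 hy
    obtain ⟨x, hxS, rfl⟩ := mem_image.1 hy
    obtain ⟨w, hw, hwX⟩ : ∃ w, lineProj j w = lineProj j x ∧ w ∉ X := by simpa using hyX
    obtain ⟨p, q, hpq, hp, -, hpX, hqX⟩ := exists_adj_of_preconnected_induce
      (preconnected_induce_lineProj_fiber j x) (P := (· ∈ X)) rfl hw (mem_inter.1 hxS).1 hwX
    exact mem_image.2 ⟨(p, q), mem_edgeBoundary.2 ⟨hpq, hpX, hqX⟩, hp⟩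
  have hgood : L * #good ≤ #(X ∩ slab lo ρ n) := by
    have hfiber : ∀ y ∈ good, #(univ.filter fun v => lineProj j v = y) = L := by
      intro y hy
      obtain ⟨x, -, rfl⟩ := mem_image.1 (mem_filter.1 hy).1
      exact card_lineProj_fiber (by simp [lineProj])
    calc L * #good = ∑ y ∈ good, #(univ.filter fun v => lineProj j v = y) := by
          rw [sum_congr rfl hfiber, sum_const, smul_eq_mul, mul_comm]
      _ = #(univ.filter fun v => lineProj j v ∈ good) := by
          rw [card_eq_sum_card_fiberwise (f := lineProj j) (t := good)
            (fun v hv => by simpa using hv)]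
          refine sum_congr rfl fun y hy => congrArg card ?_
          ext v
          simp only [mem_filter, mem_univ, true_and]
          exact ⟨fun h => ⟨h ▸ hy, h⟩, And.right⟩
      _ ≤ #(X ∩ slab lo ρ n) := card_le_card fun v hv => by
          simp only [mem_filter, mem_univ, true_and] at hv
          obtain ⟨hv, hvX⟩ := mem_filter.1 hv
          obtain ⟨x, hxS, hxv⟩ := mem_image.1 hv
          refine mem_inter.2 ⟨hvX v rfl, mem_filter.2 ⟨mem_univ _, fun i hi => ?_⟩⟩
          have hij : i ≠ j := fun h => by simp [h, j] at hi
          rw [← lineProj_eq_lineProj_iff.1 hxv i hij]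
          exact (mem_filter.1 (mem_inter.1 hxS).2).2 i (by omega)
  have hlines : #S ≤ (ρ + 1) * (#good + #((boxGraph d L).edgeBoundary X)) := by
    rw [← card_filter_add_card_filter_not (s := lines) (fun y => ∀ v, lineProj j v = y → v ∈ X)]
      at hS
    exact hS.trans (Nat.mul_le_mul_left _ (Nat.add_le_add_left hbad _))
  have hρ : (0 : ℝ) < ρ + 1 := by positivity
  calc (L : ℝ) * (#S / (ρ + 1) - #((boxGraph d L).edgeBoundary X)) ≤ L * #good := by
        gcongr
        rw [sub_le_iff_le_add, div_le_iff₀ hρ]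
        exact_mod_cast hlines.trans_eq (mul_comm _ _)
    _ ≤ #(X ∩ slab lo ρ n) := by exact_mod_cast hgood

end Slab

section Cube

variable {d L : ℕ}

open SimpleGraph

def cube (c : Fin d → Fin L) (r : ℕ) : Finset (Fin d → Fin L) :=
  univ.filter fun v => ∀ i, (v i : ℕ) ≤ c i + r ∧ (c i : ℕ) ≤ v i + r

theorem mem_cube {c v : Fin d → Fin L} {r : ℕ} :
    v ∈ cube c r ↔ ∀ i, (v i : ℕ) ≤ c i + r ∧ (c i : ℕ) ≤ v i + r := by
  simp [cube]

theorem mem_cube_self (c : Fin d → Fin L) (r : ℕ) : c ∈ cube c r :=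
  mem_cube.2 fun _ => ⟨by omega, by omega⟩

theorem card_cube_le (c : Fin d → Fin L) (r : ℕ) : #(cube c r) ≤ (2 * r + 1) ^ d := by
  have hcube : cube c r = Fintype.piFinset fun i =>
      univ.filter fun t : Fin L => (t : ℕ) ≤ c i + r ∧ (c i : ℕ) ≤ t + r := by
    ext v; simp [cube]
  have hwin : ∀ i, #(univ.filter fun t : Fin L => (t : ℕ) ≤ c i + r ∧ (c i : ℕ) ≤ t + r) ≤
      2 * r + 1 := fun i => calc
    _ ≤ #(Icc (c i - r : ℕ) (c i + r)) :=
        card_le_card_of_injOn Fin.val (fun t ht => by simp at ht ⊢; omega) Fin.val_injective.injOn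
    _ ≤ 2 * r + 1 := by simp; omega
  rw [hcube, Fintype.card_piFinset]
  exact (prod_le_prod' fun i _ => hwin i).trans_eq (by simp)

theorem preconnected_induce_cube (c : Fin d → Fin L) (r : ℕ) :
    ((boxGraph d L).induce (cube c r : Set (Fin d → Fin L))).Preconnected := by
  have : (cube c r : Set (Fin d → Fin L)) =
      {v | ∀ i, (c i - r : ℕ) ≤ v i ∧ (v i : ℕ) ≤ c i + r} := by
    ext v
    simp only [mem_coe, mem_cube, Set.mem_ofPred_eq]
    exact forall_congr' fun i => by omega
  rw [this]
  exact preconnected_induce_subbox _ _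

end Cube

section NearBoundary

variable {d L : ℕ} [NeZero L]

open SimpleGraph

/-- In terms of relative size, passing from `slab (n + 1)` to `slab n` loses at most
`m / (ρ + 1)`. -/
theorem card_inter_slab_ge {X : Finset (Fin d → Fin L)} {lo : Fin d → ℕ} {ρ : ℕ} (hd : 2 ≤ d)
    (hlo : ∀ i, lo i + ρ < L) (hX : slab lo ρ d ⊆ X) :
    ∀ k ≤ d, (1 - k * (#((boxGraph d L).edgeBoundary X) : ℝ) / (ρ + 1)) *
      ((ρ + 1) ^ (d - k) * L ^ k) ≤ #(X ∩ slab lo ρ (d - k))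
  | 0, _ => by simp [inter_eq_right.2 hX, card_slab_dim hlo]
  | k + 1, hk => by
    have ih := card_inter_slab_ge hd hlo hX k (by omega)
    have step := card_inter_slab_step X lo ρ (n := d - (k + 1)) (by omega)
    rw [show d - (k + 1) + 1 = d - k by omega] at step
    set B : ℝ := ρ + 1
    set m : ℝ := (#((boxGraph d L).edgeBoundary X) : ℝ)
    set P : ℝ := B ^ (d - (k + 1)) * L ^ k
    have hB : 1 ≤ B := by simp [B]
    have hP : B ≤ P := calc
      B ≤ B ^ (d - 1) := le_self_pow₀ hB (by omega)
      _ = B ^ (d - (k + 1)) * B ^ k := by rw [← pow_add]; congr 1; omega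
      _ ≤ P := by
        have : B ≤ L := by simp only [B]; exact_mod_cast (hlo ⟨0, by omega⟩).trans_le' (by omega)
        exact mul_le_mul_of_nonneg_left (pow_le_pow_left₀ (by positivity) this k) (by positivity)
    have h1 : (1 - k * m / B) * P ≤ #(X ∩ slab lo ρ (d - k)) / B := by
      rw [le_div_iff₀ (by positivity)]
      calc (1 - k * m / B) * P * B = (1 - k * m / B) * (B ^ (d - k) * L ^ k) := by
            rw [show d - k = d - (k + 1) + 1 by omega, pow_succ]; ring
        _ ≤ _ := ih
    have h2 : m ≤ m * P / B := by
      rw [le_div_iff₀ (by positivity)]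
      exact mul_le_mul_of_nonneg_left hP (by positivity)
    calc (1 - ((k + 1 : ℕ) : ℝ) * m / B) * (B ^ (d - (k + 1)) * L ^ (k + 1))
        = L * ((1 - k * m / B) * P - m * P / B) := by simp only [P]; push_cast; ring
      _ ≤ L * (#(X ∩ slab lo ρ (d - k)) / B - m) :=
        mul_le_mul_of_nonneg_left (by linarith) (Nat.cast_nonneg L)
      _ ≤ _ := step

/-- Otherwise `X` would contain a cube of side `8 d m + 1`, and by `card_inter_slab_ge` it would
fill seven eighths of the box. -/
theorem exists_mem_edgeBoundary_fst_mem_cube (hd : 2 ≤ d) {X : Finset (Fin d → Fin L)}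
    {a : Fin d → Fin L} (haX : a ∈ X) (hXu : X ≠ univ) (hX : (#X : ℝ) ≤ 3 * L ^ d / 4) :
    ∃ p ∈ (boxGraph d L).edgeBoundary X,
      p.1 ∈ cube a (8 * d * #((boxGraph d L).edgeBoundary X)) := by
  set m := #((boxGraph d L).edgeBoundary X)
  set ρ := 8 * d * m
  by_cases hcube : cube a ρ ⊆ X
  · exfalso
    have hρL : ρ < L := by
      by_contra h
      exact hXu (eq_univ_of_forall fun v =>
        hcube (mem_cube.2 fun i => by have := (v i).isLt; have := (a i).isLt; omega))
    set lo : Fin d → ℕ := fun i => min (a i) (L - 1 - ρ)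
    have hlo : ∀ i, lo i + ρ < L := fun i => by simp only [lo]; omega
    have hslab : slab lo ρ d ⊆ X := fun v hv => hcube <| mem_cube.2 fun i => by
      have hvi := (mem_filter.1 hv).2 i i.isLt
      have := (a i).isLt
      simp only [lo] at hvi
      omega
    have hcard := card_inter_slab_ge hd hlo hslab d le_rfl
    simp only [Nat.sub_self, pow_zero, one_mul, slab_zero, inter_univ] at hcard
    have hfrac : (d * m : ℝ) / (ρ + 1) ≤ 1 / 8 := by
      rw [div_le_iff₀ (by positivity)]
      push_cast [ρ]
      nlinarith
    have hL : (0 : ℝ) < L ^ d := pow_pos (by exact_mod_cast Nat.pos_of_ne_zero (NeZero.ne L)) d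
    nlinarith
  · obtain ⟨w, hw, hwX⟩ := not_subset.1 hcube
    obtain ⟨p, q, hpq, hp, -, hpX, hqX⟩ := exists_adj_of_preconnected_induce
      (preconnected_induce_cube a ρ) (P := (· ∈ X)) (mem_cube_self a ρ) hw haX hwX
    exact ⟨(p, q), mem_edgeBoundary.2 ⟨hpq, hpX, hqX⟩, hp⟩

end NearBoundary

section Counting

variable {d L : ℕ}

open SimpleGraph

theorem IsUnitStep.le_apply {l : Fin d} {x y : Fin d → Fin L} (h : IsUnitStep l x y) (i : Fin d) :
    (x i : ℕ) ≤ y i ∧ (y i : ℕ) ≤ x i + 1 := by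
  by_cases hil : i = l
  · subst hil; have := h.2; omega
  · rw [h.1 i hil]; omega

theorem IsUnitSquare.le_apply {u u' w w' z : Fin d → Fin L} (h : IsUnitSquare u u' w w')
    (hz : z ∈ ({u, u', w, w'} : Set (Fin d → Fin L))) (i : Fin d) :
    (u i : ℕ) ≤ z i ∧ (z i : ℕ) ≤ u i + 1 := by
  obtain ⟨k, j, hkj, hu', hw, hw'⟩ := h
  rcases hz with rfl | rfl | rfl | rfl
  · omega
  · exact hu'.le_apply i
  · exact hw.le_apply i
  · by_cases hij : i = j
    · subst hij
      have := hw'.2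
      have := congrArg Fin.val (hu'.1 i (Ne.symm hkj))
      omega
    · rw [← hw'.1 i hij]
      exact hu'.le_apply i

theorem IsUnitSquare.mem_cube_one {u u' w w' s t : Fin d → Fin L} (h : IsUnitSquare u u' w w')
    (hs : s ∈ ({u, u', w, w'} : Set (Fin d → Fin L)))
    (ht : t ∈ ({u, u', w, w'} : Set (Fin d → Fin L))) : t ∈ cube s 1 :=
  mem_cube.2 fun i => by have := h.le_apply hs i; have := h.le_apply ht i; omega

theorem degree_plaquetteGraph_le [DecidableRel (plaquetteGraph d L).Adj]
    (p : (Fin d → Fin L) × (Fin d → Fin L)) : (plaquetteGraph d L).degree p ≤ 9 ^ d := by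
  have hsub : (plaquetteGraph d L).neighborFinset p ⊆ cube p.1 1 ×ˢ cube p.1 1 := by
    intro q hq
    obtain ⟨-, ⟨u, u', w, w', hsq, hQ⟩ | ⟨u, u', w, w', hsq, hQ⟩⟩ :=
      (mem_neighborFinset _ _ _).1 hq
    all_goals simp only [Set.insert_subset_iff, Set.singleton_subset_iff] at hQ
    · exact mem_product.2 ⟨hsq.mem_cube_one hQ.1 hQ.2.2.1, hsq.mem_cube_one hQ.1 hQ.2.2.2⟩
    · exact mem_product.2 ⟨hsq.mem_cube_one hQ.2.2.1 hQ.1, hsq.mem_cube_one hQ.2.2.1 hQ.2.1⟩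
  calc (plaquetteGraph d L).degree p ≤ #(cube p.1 1 ×ˢ cube p.1 1) := by
        rw [← card_neighborFinset_eq_degree]; exact card_le_card hsub
    _ ≤ 3 ^ d * 3 ^ d := by
        rw [card_product]; exact Nat.mul_le_mul (card_cube_le _ 1) (card_cube_le _ 1)
    _ = 9 ^ d := by rw [← mul_pow]; norm_num

theorem mem_cube_one_of_adj {u v : Fin d → Fin L} (h : (boxGraph d L).Adj u v) : v ∈ cube u 1 := by
  obtain ⟨i, h | h⟩ := boxGraph_adj_iff.1 h <;>
    exact mem_cube.2 fun k => by have := h.le_apply k; omega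

theorem card_product_cube_le (a : Fin d → Fin L) (ρ : ℕ) :
    #(cube a ρ ×ˢ cube a (ρ + 1)) ≤ (2 * ρ + 3) ^ (2 * d) :=
  calc #(cube a ρ ×ˢ cube a (ρ + 1)) ≤ (2 * ρ + 1) ^ d * (2 * (ρ + 1) + 1) ^ d := by
        rw [card_product]; exact Nat.mul_le_mul (card_cube_le a ρ) (card_cube_le a (ρ + 1))
    _ ≤ (2 * ρ + 3) ^ d * (2 * ρ + 3) ^ d :=
        Nat.mul_le_mul (Nat.pow_le_pow_left (by omega) d) (Nat.pow_le_pow_left (by omega) d)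
    _ = (2 * ρ + 3) ^ (2 * d) := by rw [← pow_add, ← two_mul]

theorem ncard_memC_le [NeZero L] (hd : 2 ≤ d) (a : Fin d → Fin L) (m : ℕ) :
    {X : Finset (Fin d → Fin L) | memC (boxGraph d L) X ∧ a ∈ X ∧
      (X.card : ℝ) ≤ 3 * (L : ℝ) ^ d / 4 ∧ bdryCard (boxGraph d L) X = m}.ncard ≤
      (2 * (8 * d * m) + 3) ^ (2 * d) * (9 ^ d + 1) ^ (2 * m) := by
  classical
  set ρ := 8 * d * m
  set roots := cube a ρ ×ˢ cube a (ρ + 1)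
  set boundaries : (Fin d → Fin L) × (Fin d → Fin L) → Finset (Finset _) := fun r =>
    univ.filter fun D => r ∈ D ∧ ((plaquetteGraph d L).induce (D : Set _)).Connected ∧ #D = m
  calc _ ≤ #(roots.biUnion boundaries) := by
        rw [← Set.ncard_coe_finset]
        refine Set.ncard_le_ncard_of_injOn (boxGraph d L).edgeBoundary ?_ ?_
        · rintro X ⟨⟨-, hXu, hX, hXc⟩, haX, hXcard, hm⟩
          obtain ⟨p, hp, hpa⟩ := exists_mem_edgeBoundary_fst_mem_cube hd haX hXu hXcard
          rw [← bdryCard_eq_card_edgeBoundary, hm] at hpa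
          have hp₂ : p.2 ∈ cube a (ρ + 1) := mem_cube.2 fun i => by
            have := mem_cube.1 (mem_cube_one_of_adj (mem_edgeBoundary.1 hp).1) i
            have := mem_cube.1 hpa i
            omega
          refine mem_biUnion.2 ⟨p, mem_product.2 ⟨hpa, hp₂⟩, mem_filter.2 ⟨mem_univ _, hp,
            connected_induce_edgeBoundary hX.preconnected hXc.preconnected hp, hm⟩⟩
        · rintro X ⟨⟨-, -, hX, -⟩, haX, -⟩ Y ⟨⟨-, -, hY, -⟩, haY, -⟩ h
          exact eq_of_edgeBoundary_eq haX haY hX.preconnected hY.preconnected h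
    _ ≤ ∑ r ∈ roots, #(boundaries r) := card_biUnion_le
    _ ≤ ∑ _r ∈ roots, (9 ^ d + 1) ^ (2 * m) :=
        sum_le_sum fun r _ => card_connected_finsets_le _ degree_plaquetteGraph_le r m
    _ = #roots * (9 ^ d + 1) ^ (2 * m) := by rw [sum_const, smul_eq_mul]
    _ ≤ _ := Nat.mul_le_mul_right _ (card_product_cube_le a ρ)

end Counting

theorem two_mul_add_three_le_pow {d m : ℕ} (hd : 1 ≤ d) (hm : 1 ≤ m) :
    2 * (8 * d * m) + 3 ≤ (38 * d) ^ m :=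
  calc 2 * (8 * d * m) + 3 ≤ 19 * d * m := by nlinarith
    _ ≤ 19 * d * 2 ^ m := Nat.mul_le_mul_left _ Nat.lt_two_pow_self.le
    _ ≤ (19 * d) ^ m * 2 ^ m := Nat.mul_le_mul_right _ (Nat.le_self_pow (by omega) _)
    _ = (38 * d) ^ m := by rw [← mul_pow]; ring_nf

/-- **Counting connected sets with connected complement.**  For every `d ≥ 2`
there is `C > 1` (depending only on `d`) such that for every `L ≥ 1`, every
vertex `a` of `Λ_L^d` and every `m ≥ 1`, the number of sets `X ∈ 𝒞(Λ_L^d)`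
with `a ∈ X`, `|X| ≤ 3L^d/4` and `|∂_{Λ_L^d} X| = m` is at most `C^m`. -/
theorem counting_connected_sets (d : ℕ) (hd : 2 ≤ d) :
    ∃ C : ℝ, 1 < C ∧ ∀ L : ℕ, 1 ≤ L → ∀ a : Fin d → Fin L, ∀ m : ℕ, 1 ≤ m →
      ({X : Finset (Fin d → Fin L) | memC (boxGraph d L) X ∧ a ∈ X ∧
          (X.card : ℝ) ≤ 3 * (L : ℝ) ^ d / 4 ∧
          bdryCard (boxGraph d L) X = m}.ncard : ℝ) ≤ C ^ m := by
  refine ⟨((38 * d) ^ (2 * d) * (9 ^ d + 1) ^ 2 : ℕ), ?_, fun L hL a m hm => ?_⟩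
  · exact_mod_cast one_lt_mul_of_le_of_lt (Nat.one_le_pow _ _ (by omega))
      (Nat.one_lt_pow two_ne_zero (Nat.lt_add_of_pos_left (by positivity)))
  have : NeZero L := ⟨by omega⟩
  have hC : (2 * (8 * d * m) + 3) ^ (2 * d) * (9 ^ d + 1) ^ (2 * m) ≤
      ((38 * d) ^ (2 * d) * (9 ^ d + 1) ^ 2) ^ m := calc
    _ ≤ ((38 * d) ^ m) ^ (2 * d) * (9 ^ d + 1) ^ (2 * m) :=
        Nat.mul_le_mul_right _ (Nat.pow_le_pow_left (two_mul_add_three_le_pow (by omega) hm) _)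
    _ = _ := by
        rw [mul_pow ((38 * d) ^ (2 * d)), ← pow_mul, ← pow_mul, ← pow_mul, mul_comm m (2 * d)]
  exact_mod_cast (ncard_memC_le hd a m).trans hC
end

section
/- Let G be a finite connected graph and let l be an integer with 2^l ≤ |V(G)| < 2^{l+1}. For i ∈ {1, …, l} and v ∈ V(G) define M_i(v) := max{|E(G|_X)| + |∂_G X| : X ∈ 𝒞(G), v ∈ X, ⌊|V(G)|/2^{i+1}⌋ < |X| ≤ ⌊|V(G)|/2^i⌋} and m_i(v) := min{|∂_G X| : X ∈ 𝒞(G), v ∈ X, ⌊|V(G)|/2^{i+1}⌋ < |X| ≤ ⌊|V(G)|/2^i⌋}. Let U : ℝ → ℝ be a convex function with U(0) = 0 and U(−x) = U(x) for all x. Let a, b be two distinct vertices of G such that all the quantities M_i(a), m_i(a), M_i(b), m_i(b), i = 1, …, l, are defined (i.e., the corresponding collections of sets X are non-empty). Then inf{Σ_{e ∈ E(G)} U(∇_e φ) : φ : V(G) → ℝ, φ(a) − φ(b) = 1} ≥ inf{Σ_{i=1}^{l} M_i(a) · U(p_i m_i(a)/M_i(a)) + Σ_{i=1}^{l} M_i(b)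 · U(q_i m_i(b)/M_i(b)) : p_1, …, p_l ≥ 0, q_1, …, q_l ≥ 0, p_1 + … + p_l + q_1 + … + q_l = 1}. -/
open Classical in
/-- `|E(G|_X)|`: the number of edges of `G` with both endpoints in `X`
(each unordered edge is counted twice as an ordered pair, whence the
division by `2`). -/
noncomputable def inEdgesCard {V : Type*} [Fintype V] (G : SimpleGraph V)
    (X : Finset V) : ℕ :=
  (Finset.univ.filter fun p : V × V => G.Adj p.1 p.2 ∧ p.1 ∈ X ∧ p.2 ∈ X).card / 2

/-- The collection of sets over which `M_i(v)` and `m_i(v)` are defined: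
`X ∈ 𝒞(G)`, `v ∈ X`, `⌊|V(G)|/2^{i+1}⌋ < |X| ≤ ⌊|V(G)|/2^i⌋`. -/
def scaleFamily {V : Type*} [Fintype V] (G : SimpleGraph V) (v : V) (i : ℕ) :
    Set (Finset V) :=
  {X | memC G X ∧ v ∈ X ∧
    Fintype.card V / 2 ^ (i + 1) < X.card ∧ X.card ≤ Fintype.card V / 2 ^ i}

/-- `M_i(v) = max {|E(G|_X)| + |∂_G X| : X ∈ scaleFamily}`. -/
noncomputable def Mscale {V : Type*} [Fintype V] (G : SimpleGraph V)
    (v : V) (i : ℕ) : ℕ :=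
  sSup ((fun X => inEdgesCard G X + bdryCard G X) '' scaleFamily G v i)

/-- `m_i(v) = min {|∂_G X| : X ∈ scaleFamily}`. -/
noncomputable def mscale {V : Type*} [Fintype V] (G : SimpleGraph V)
    (v : V) (i : ℕ) : ℕ :=
  sInf ((fun X => bdryCard G X) '' scaleFamily G v i)

open Classical in
/-- `∑_{e ∈ E(G)} U(∇_e φ)`; since `U` is even, this equals half the sum over
ordered pairs of adjacent vertices. -/
noncomputable def energyR {V : Type*} [Fintype V] (G : SimpleGraph V)
    (U : ℝ → ℝ) (φ : V → ℝ) : ℝ :=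
  (1/2) * ∑ u : V, ∑ w : V, if G.Adj u w then U (φ u - φ w) else 0

open Finset

namespace ConvexOn

variable {U : ℝ → ℝ}

theorem map_mul_le_mul (hU : ConvexOn ℝ (Set.Ici 0) U) (hU0 : U 0 = 0) {t x : ℝ}
    (ht₀ : 0 ≤ t) (ht₁ : t ≤ 1) (hx : 0 ≤ x) : U (t * x) ≤ t * U x := by
  simpa [hU0] using hU.2 hx (Set.self_mem_Ici (a := (0 : ℝ))) ht₀ (sub_nonneg.2 ht₁) (by ring)

theorem add_le_map_add (hU : ConvexOn ℝ (Set.Ici 0) U) (hU0 : U 0 = 0) {x y : ℝ}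
    (hx : 0 ≤ x) (hy : 0 ≤ y) : U x + U y ≤ U (x + y) := by
  rcases (add_nonneg hx hy).eq_or_lt with hxy | hxy
  · obtain ⟨rfl, rfl⟩ : x = 0 ∧ y = 0 := ⟨by linarith, by linarith⟩
    simp [hU0]
  have key : ∀ z, 0 ≤ z → z ≤ x + y → U z ≤ z / (x + y) * U (x + y) := fun z hz hzxy => by
    simpa [div_mul_cancel₀ z hxy.ne'] using
      hU.map_mul_le_mul hU0 (div_nonneg hz hxy.le) ((div_le_one hxy).2 hzxy) hxy.le
  have := add_le_add (key x hx (by linarith)) (key y hy (by linarith))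
  rwa [← add_mul, ← add_div, div_self hxy.ne', one_mul] at this

theorem sum_map_le_map_sum (hU : ConvexOn ℝ (Set.Ici 0) U) (hU0 : U 0 = 0) {α : Type*}
    (s : Finset α) {c : α → ℝ} (hc : ∀ i ∈ s, 0 ≤ c i) :
    ∑ i ∈ s, U (c i) ≤ U (∑ i ∈ s, c i) := by
  have := le_sum_of_subadditive_on_pred (fun x => -U x) (0 ≤ ·) (by simp [hU0])
    (fun x y hx hy => by linarith [hU.add_le_map_add hU0 hx hy])
    (fun _ _ => add_nonneg) c hc
  simpa [sum_neg_distrib] using this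

/-- Jensen's inequality with `M ≥ #s` slots, the missing ones filled by zeros. -/
theorem mul_map_sum_div_le (hU : ConvexOn ℝ (Set.Ici 0) U) (hU0 : U 0 = 0) {α : Type*}
    (s : Finset α) {c : α → ℝ} (hc : ∀ i ∈ s, 0 ≤ c i) {M : ℝ} (hM : (#s : ℝ) ≤ M) :
    M * U ((∑ i ∈ s, c i) / M) ≤ ∑ i ∈ s, U (c i) := by
  rcases s.eq_empty_or_nonempty with rfl | hs
  · simp [hU0]
  have hs₀ : (0 : ℝ) < #s := by exact_mod_cast hs.card_pos
  have hM₀ : 0 < M := hs₀.trans_le hM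
  have jensen : U ((∑ i ∈ s, c i) / #s) ≤ (∑ i ∈ s, U (c i)) / #s := by
    have := hU.map_sum_le (t := s) (w := fun _ => (#s : ℝ)⁻¹) (p := c)
      (fun _ _ => by positivity) (by simp [hs₀.ne']) hc
    simpa [← mul_sum, div_eq_inv_mul] using this
  have shrink := hU.map_mul_le_mul hU0 (div_nonneg hs₀.le hM₀.le) ((div_le_one hM₀).2 hM)
    (div_nonneg (sum_nonneg hc) hs₀.le)
  rw [show #s / M * ((∑ i ∈ s, c i) / #s) = (∑ i ∈ s, c i) / M by field_simp] at shrink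
  calc M * U ((∑ i ∈ s, c i) / M) ≤ M * (#s / M * ((∑ i ∈ s, U (c i)) / #s)) := by
        gcongr
        exact shrink.trans (mul_le_mul_of_nonneg_left jensen (by positivity))
    _ = ∑ i ∈ s, U (c i) := by field_simp

theorem nonneg_of_even (hU : ConvexOn ℝ Set.univ U) (hU0 : U 0 = 0)
    (hUeven : ∀ x, U (-x) = U x) (x : ℝ) : 0 ≤ U x := by
  have := hU.le_on_segment (Set.mem_univ (-x)) (Set.mem_univ x) (z := 0)
    (by rw [segment_eq_uIcc, Set.mem_uIcc]; rcases le_total 0 x with h | h <;> simp [h])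
  simpa [hU0, hUeven] using this

theorem monotoneOn_of_even (hU : ConvexOn ℝ Set.univ U) (hUeven : ∀ x, U (-x) = U x) :
    MonotoneOn U (Set.Ici 0) := by
  intro x hx y _ hxy
  have := hU.le_on_segment (Set.mem_univ (-y)) (Set.mem_univ y) (z := x)
    (by rw [segment_eq_uIcc, Set.mem_uIcc]; exact Or.inl ⟨by linarith [Set.mem_Ici.1 hx], hxy⟩)
  simpa [hUeven] using this

end ConvexOn

theorem Finset.exists_levels_between (W : Finset ℝ) {x₀ x₁ : ℝ} (h₀ : x₀ ∈ W) (h₁ : x₁ ∈ W)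
    (h : x₀ ≤ x₁) :
    ∃ (k : ℕ) (s : ℕ → ℝ), Monotone s ∧ s 0 = x₀ ∧ s k = x₁ ∧
      ∀ r < k, s r < s (r + 1) ∧ ∀ x ∈ W, s r < x → s (r + 1) ≤ x := by
  set W' := {x ∈ W | x₀ ≤ x ∧ x ≤ x₁}
  have hW' : ∀ x ∈ W', x₀ ≤ x ∧ x ≤ x₁ := fun x hx => (mem_filter.1 hx).2
  have hx₀ : x₀ ∈ W' := mem_filter.2 ⟨h₀, le_rfl, h⟩
  have hx₁ : x₁ ∈ W' := mem_filter.2 ⟨h₁, h, le_rfl⟩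
  set e := W'.orderEmbOfFin rfl
  have he : ∀ x ∈ W', x ∈ Set.range e := fun x hx => by rwa [W'.range_orderEmbOfFin rfl]
  have he' : ∀ j, x₀ ≤ e j ∧ e j ≤ x₁ := fun j => hW' _ (W'.orderEmbOfFin_mem rfl j)
  set k := #W' - 1
  have hk : k < #W' := Nat.sub_lt (card_pos.2 ⟨x₀, hx₀⟩) one_pos
  set s : ℕ → ℝ := fun r => e ⟨min r k, (min_le_right r k).trans_lt hk⟩
  have hs : ∀ r (hr : r ≤ k), s r = e ⟨r, hr.trans_lt hk⟩ := fun r hr => by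
    simp [s, min_eq_left hr]
  have hmono : Monotone s := fun r r' hrr' => e.monotone (Fin.mk_le_mk.2 (min_le_min_right k hrr'))
  have hsk : s k = x₁ := by
    obtain ⟨j, hj⟩ := he x₁ hx₁
    rw [hs k le_rfl, ← hj]
    exact le_antisymm (hj ▸ (he' _).2) (e.monotone (Fin.mk_le_mk.2 (by omega)))
  refine ⟨k, s, hmono, ?_, hsk, fun r hr => ⟨?_, fun x hx hrx => ?_⟩⟩
  · obtain ⟨j, hj⟩ := he x₀ hx₀
    rw [hs 0 (Nat.zero_le k), ← hj]
    exact le_antisymm (e.monotone (Fin.mk_le_mk.2 (Nat.zero_le _))) (hj ▸ (he' _).1)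
  · rw [hs r hr.le, hs (r + 1) hr]
    exact e.strictMono (Fin.mk_lt_mk.2 (Nat.lt_succ_self r))
  · by_cases hx₁' : x ≤ x₁
    · obtain ⟨j, rfl⟩ := he x (mem_filter.2 ⟨hx, (he' _).1.trans hrx.le, hx₁'⟩)
      rw [hs r hr.le] at hrx
      rw [hs (r + 1) hr]
      exact e.monotone (Fin.mk_le_mk.2 (e.lt_iff_lt.1 hrx))
    · exact (hmono hr).trans (hsk.trans_le (not_le.1 hx₁').le)

/-- Clamping to `[A, B]` turns the selected gaps into part of a telescoping sum. -/
theorem Monotone.sum_gaps_le {s : ℕ → ℝ} (hs : Monotone s) (k : ℕ) {A B : ℝ} (hAB : A ≤ B) :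
    ∑ r ∈ range k with A ≤ s r ∧ s (r + 1) ≤ B, (s (r + 1) - s r) ≤ B - A := by
  set g : ℝ → ℝ := fun x => max A (min B x)
  have hg : Monotone (g ∘ s) := fun r r' h => max_le_max le_rfl (min_le_min le_rfl (hs h))
  calc ∑ r ∈ range k with A ≤ s r ∧ s (r + 1) ≤ B, (s (r + 1) - s r)
      = ∑ r ∈ range k with A ≤ s r ∧ s (r + 1) ≤ B, (g (s (r + 1)) - g (s r)) := by
        refine sum_congr rfl fun r hr => ?_
        obtain ⟨h₁, h₂⟩ := (mem_filter.1 hr).2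
        have h₀ := hs (Nat.le_succ r)
        simp only [g, min_eq_right h₂, min_eq_right (h₀.trans h₂), max_eq_right h₁,
          max_eq_right (h₁.trans h₀)]
    _ ≤ ∑ r ∈ range k, (g (s (r + 1)) - g (s r)) :=
        sum_le_sum_of_subset_of_nonneg (filter_subset _ _)
          fun r _ _ => sub_nonneg.2 (hg (Nat.le_succ r))
    _ = g (s k) - g (s 0) := sum_range_sub (g ∘ s) k
    _ ≤ B - A := sub_le_sub (max_le hAB (min_le_left _ _)) (le_max_left _ _)

theorem Monotone.sum_gaps_separating_le {s : ℕ → ℝ} (hs : Monotone s) {k : ℕ} {x y : ℝ}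
    (hgap : ∀ r < k, ∀ z ∈ ({x, y} : Set ℝ), s r < z → s (r + 1) ≤ z)
    {P : ℕ → Prop} [DecidablePred P] (hP : ∀ r < k, P r → (s r < x ↔ ¬ s r < y)) :
    ∑ r ∈ range k with P r, (s (r + 1) - s r) ≤ |x - y| := by
  rw [← max_sub_min_eq_abs']
  refine (sum_le_sum_of_subset_of_nonneg (fun r hr => ?_)
    fun r _ _ => sub_nonneg.2 (hs (Nat.le_succ r))).trans (hs.sum_gaps_le k min_le_max)
  obtain ⟨hrk, hr⟩ := mem_filter.1 hr
  have hsep : min x y ≤ s r ∧ s r < max x y := by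
    have hxy := hP r (mem_range.1 hrk) hr
    by_cases h : s r < x
    · exact ⟨min_le_of_right_le (not_lt.1 (hxy.1 h)), lt_max_of_lt_left h⟩
    · exact ⟨min_le_of_left_le (not_lt.1 h), lt_max_of_lt_right (not_not.1 (mt hxy.2 h))⟩
  refine mem_filter.2 ⟨hrk, hsep.1, ?_⟩
  rcases max_choice x y with h | h <;> rw [h] at hsep ⊢ <;>
    exact hgap r (mem_range.1 hrk) _ (by simp) hsep.2

theorem Nat.exists_dyadic_scale {n l c : ℕ} (hn : n < 2 ^ (l + 1)) (hc₀ : 0 < c)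
    (hc : c ≤ n / 2) : ∃ i ∈ Icc 1 l, n / 2 ^ (i + 1) < c ∧ c ≤ n / 2 ^ i := by
  have hex : ∃ j, n / 2 ^ (j + 1) < c := ⟨l, by rwa [Nat.div_eq_of_lt hn]⟩
  obtain ⟨j, hj⟩ : ∃ j, Nat.find hex = j + 1 := Nat.exists_eq_add_one_of_ne_zero fun h0 => by
    have := Nat.find_spec hex
    rw [h0] at this
    omega
  refine ⟨j + 1, mem_Icc.2 ⟨by omega, ?_⟩, hj ▸ Nat.find_spec hex, ?_⟩
  · exact hj ▸ Nat.find_min' hex (by rwa [Nat.div_eq_of_lt hn])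
  · exact not_lt.1 (Nat.find_min hex (by omega : j < Nat.find hex))

theorem Monotone.subset_or_subset_of_side_eq {α β : Type*} [Fintype α] [DecidableEq α]
    {B Z : ℕ → Finset α} {x : ℕ → β} {a b : β} (hB : Monotone B) (hab : a ≠ b) {R : Finset ℕ}
    (hZ : ∀ r ∈ R, Z r = (B r)ᶜ ∧ x r = a ∨ Z r = B r ∧ x r = b) :
    ∀ r ∈ R, ∀ r' ∈ R, x r = x r' → Z r ⊆ Z r' ∨ Z r' ⊆ Z r := by
  suffices h : ∀ r ∈ R, ∀ r' ∈ R, x r = x r' → r ≤ r' → Z r ⊆ Z r' ∨ Z r' ⊆ Z r by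
    intro r hr r' hr' hx
    rcases le_total r r' with h' | h'
    · exact h r hr r' hr' hx h'
    · exact (h r' hr' r hr hx.symm h').symm
  intro r hr r' hr' hx h
  rcases hZ r hr with ⟨h₁, hx₁⟩ | ⟨h₁, hx₁⟩ <;>
    rcases hZ r' hr' with ⟨h₂, hx₂⟩ | ⟨h₂, hx₂⟩ <;> rw [h₁, h₂]
  · exact .inr (compl_subset_compl.2 (hB h))
  · exact absurd (hx₁.symm.trans (hx.trans hx₂)) hab
  · exact absurd (hx₂.symm.trans (hx.symm.trans hx₁)) hab
  · exact .inl (hB h)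

namespace SimpleGraph

open scoped Classical

variable {V : Type*} {G : SimpleGraph V}

variable (G) in
/-- Note that `G.ReachIn S u u` holds even when `u ∉ S`. -/
def ReachIn (S : Set V) : V → V → Prop :=
  Relation.ReflTransGen fun x y => G.Adj x y ∧ x ∈ S ∧ y ∈ S

namespace ReachIn

variable {S T : Set V} {u v w : V}

theorem tail (h : G.ReachIn S u v) (hvw : G.Adj v w) (hv : v ∈ S) (hw : w ∈ S) :
    G.ReachIn S u w :=
  Relation.ReflTransGen.tail h ⟨hvw, hv, hw⟩

theorem mono (hST : S ⊆ T) (h : G.ReachIn S u v) : G.ReachIn T u v :=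
  Relation.ReflTransGen.mono (fun _ _ h => ⟨h.1, hST h.2.1, hST h.2.2⟩) _ _ h

theorem mem (h : G.ReachIn S u v) (hu : u ∈ S) : v ∈ S := by
  induction h with
  | refl => exact hu
  | tail _ hxy _ => exact hxy.2.2

theorem reachable (h : G.ReachIn S u v) (hu : u ∈ S) :
    (G.induce S).Reachable ⟨u, hu⟩ ⟨v, h.mem hu⟩ := by
  induction h with
  | refl => rfl
  | tail _ hxy ih => exact ih.trans (Adj.reachable hxy.1)

end ReachIn

theorem connected_induce_of_reachIn {S : Set V} {a : V} (ha : a ∈ S)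
    (h : ∀ v ∈ S, G.ReachIn S a v) : (G.induce S).Connected := by
  rw [connected_iff_exists_forall_reachable]
  exact ⟨⟨a, ha⟩, fun ⟨v, hv⟩ => (h v hv).reachable ha⟩

variable [Fintype V]

section Cuts

variable {S T : Set V} {a b u v : V}

variable (G) in
/-- The component of `a` in `G[S]`; it is `{a}` when `a ∉ S`. -/
noncomputable def componentIn (S : Set V) (a : V) : Finset V := {v | G.ReachIn S a v}

theorem mem_componentIn : v ∈ G.componentIn S a ↔ G.ReachIn S a v := by
  simp [componentIn]

theorem self_mem_componentIn : a ∈ G.componentIn S a :=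
  mem_componentIn.2 .refl

theorem componentIn_subset (ha : a ∈ S) : ↑(G.componentIn S a) ⊆ S :=
  fun _ hv => (mem_componentIn.1 hv).mem ha

theorem componentIn_mono (hST : S ⊆ T) : G.componentIn S a ⊆ G.componentIn T a :=
  fun _ hv => mem_componentIn.2 ((mem_componentIn.1 hv).mono hST)

theorem mem_componentIn_of_adj (hu : u ∈ G.componentIn S a) (huv : G.Adj u v) (ha : a ∈ S)
    (hv : v ∈ S) : v ∈ G.componentIn S a :=
  mem_componentIn.2 ((mem_componentIn.1 hu).tail huv (componentIn_subset ha hu) hv)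

theorem ReachIn.reachIn_componentIn (h : G.ReachIn S a v) :
    G.ReachIn (G.componentIn S a) a v := by
  induction h with
  | refl => exact .refl
  | tail hx hxy ih =>
    exact ih.tail hxy.1 (mem_componentIn.2 hx) (mem_componentIn.2 (hx.tail hxy))

theorem connected_induce_componentIn : (G.induce (G.componentIn S a : Set V)).Connected :=
  connected_induce_of_reachIn self_mem_componentIn
    fun _ hv => (mem_componentIn.1 hv).reachIn_componentIn

theorem mem_compl_componentIn (ha : a ∈ S) (hb : b ∉ S) :
    b ∈ (G.componentIn S a : Set V)ᶜ :=
  fun h => hb (componentIn_subset ha h)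

variable (G) in
noncomputable def cutSide (S : Set V) (a b : V) : Finset V :=
  G.componentIn (G.componentIn S a : Set V)ᶜ b

theorem self_mem_cutSide : b ∈ G.cutSide S a b := self_mem_componentIn

theorem componentIn_subset_compl_cutSide (ha : a ∈ S) (hb : b ∉ S) :
    G.componentIn S a ⊆ (G.cutSide S a b)ᶜ := fun _ hx =>
  mem_compl.2 fun hxB => componentIn_subset (mem_compl_componentIn ha hb) hxB hx

theorem notMem_cutSide (ha : a ∈ S) (hb : b ∉ S) : a ∉ G.cutSide S a b :=
  mem_compl.1 (componentIn_subset_compl_cutSide ha hb self_mem_componentIn)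

theorem cutSide_anti (hST : S ⊆ T) : G.cutSide T a b ⊆ G.cutSide S a b :=
  componentIn_mono (Set.compl_subset_compl.2 (by exact_mod_cast componentIn_mono hST))

theorem mem_componentIn_of_adj_cutSide (ha : a ∈ S) (hb : b ∉ S) (huv : G.Adj u v)
    (hu : u ∈ G.cutSide S a b) (hv : v ∉ G.cutSide S a b) : v ∈ G.componentIn S a := by
  by_contra hvX
  exact hv (mem_componentIn_of_adj hu huv (mem_compl_componentIn ha hb) hvX)

theorem notMem_and_mem_of_adj_cutSide (ha : a ∈ S) (hb : b ∉ S) (huv : G.Adj u v)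
    (hu : u ∈ G.cutSide S a b) (hv : v ∉ G.cutSide S a b) : u ∉ S ∧ v ∈ S := by
  have hvX := mem_componentIn_of_adj_cutSide ha hb huv hu hv
  exact ⟨fun huS => mem_compl.1 (componentIn_subset_compl_cutSide ha hb
    (mem_componentIn_of_adj hvX huv.symm ha huS)) hu, componentIn_subset ha hvX⟩

theorem mem_iff_notMem_of_adj_cutSide (ha : a ∈ S) (hb : b ∉ S) (huv : G.Adj u v)
    (h : u ∈ G.cutSide S a b ↔ v ∉ G.cutSide S a b) : u ∈ S ↔ v ∉ S := by
  by_cases hu : u ∈ G.cutSide S a b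
  · have := notMem_and_mem_of_adj_cutSide ha hb huv hu (h.1 hu)
    tauto
  · have := notMem_and_mem_of_adj_cutSide ha hb huv.symm (not_not.1 (mt h.2 hu)) hu
    tauto

theorem reachIn_compl_cutSide (hG : G.Connected) (ha : a ∈ S) (hb : b ∉ S)
    (hv : v ∉ G.cutSide S a b) : G.ReachIn (↑(G.cutSide S a b))ᶜ a v := by
  induction (reachable_iff_reflTransGen a v).1 (hG.preconnected a v) with
  | refl => exact .refl
  | @tail x y _ hxy ih =>
    by_cases hx : x ∈ G.cutSide S a b
    · have hy := mem_componentIn_of_adj_cutSide ha hb hxy hx hv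
      exact (mem_componentIn.1 hy).reachIn_componentIn.mono
        fun z hz => mem_compl.1 (componentIn_subset_compl_cutSide ha hb hz)
    · exact (ih hx).tail hxy hx hv

theorem connected_induce_compl_cutSide (hG : G.Connected) (ha : a ∈ S) (hb : b ∉ S) :
    (G.induce (↑(G.cutSide S a b))ᶜ).Connected :=
  connected_induce_of_reachIn (notMem_cutSide ha hb) fun _ hv =>
    reachIn_compl_cutSide hG ha hb hv

theorem memC_cutSide (hG : G.Connected) (ha : a ∈ S) (hb : b ∉ S) :
    memC G (G.cutSide S a b) :=
  ⟨⟨b, self_mem_cutSide⟩, fun h => notMem_cutSide ha hb (h ▸ mem_univ a),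
    connected_induce_componentIn, connected_induce_compl_cutSide hG ha hb⟩

theorem memC_compl_cutSide (hG : G.Connected) (ha : a ∈ S) (hb : b ∉ S) :
    memC G (G.cutSide S a b)ᶜ := by
  refine ⟨⟨a, mem_compl.2 (notMem_cutSide ha hb)⟩,
    (compl_ne_univ_iff_nonempty _).2 ⟨b, self_mem_cutSide⟩, ?_, ?_⟩
  · rw [coe_compl]
    exact connected_induce_compl_cutSide hG ha hb
  · rw [coe_compl, compl_compl]
    exact connected_induce_componentIn

end Cuts

variable (G) in
noncomputable def adjPairs : Finset (V × V) := {p | G.Adj p.1 p.2}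

variable (G) in
noncomputable def outPairs (X : Finset V) : Finset (V × V) :=
  {p | G.Adj p.1 p.2 ∧ p.1 ∈ X ∧ p.2 ∉ X}

theorem mem_outPairs {X : Finset V} {p : V × V} :
    p ∈ G.outPairs X ↔ G.Adj p.1 p.2 ∧ p.1 ∈ X ∧ p.2 ∉ X := by
  simp [outPairs]

theorem card_outPairs (X : Finset V) : #(G.outPairs X) = bdryCard G X := rfl

theorem energyR_eq_sum_adjPairs (U : ℝ → ℝ) (φ : V → ℝ) :
    energyR G U φ = 1 / 2 * ∑ p ∈ G.adjPairs, U (φ p.1 - φ p.2) := by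
  rw [energyR, adjPairs, sum_filter, ← univ_product_univ, sum_product]

theorem sum_adjPairs_swap (f : V × V → ℝ) :
    ∑ p ∈ G.adjPairs, f p.swap = ∑ p ∈ G.adjPairs, f p :=
  sum_nbij' Prod.swap Prod.swap (by simp [adjPairs, adj_comm]) (by simp [adjPairs, adj_comm])
    (by simp) (by simp) (by simp)

/-- Pairs leaving `Y` are counted by `∂Y`; the pairs inside `Y`, none of them together with its
reverse, by half the ordered pairs inside `Y`, that is by `E(G|_Y)`. -/
theorem card_le_inEdgesCard_add_bdryCard {K : Finset (V × V)} {Y : Finset V}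
    (hK : ∀ p ∈ K, G.Adj p.1 p.2 ∧ p.1 ∈ Y) (hswap : ∀ p ∈ K, p.swap ∉ K) :
    #K ≤ inEdgesCard G Y + bdryCard G Y := by
  set K₁ := K.filter (·.2 ∈ Y)
  have hin : 2 * #K₁ ≤ #({p | G.Adj p.1 p.2 ∧ p.1 ∈ Y ∧ p.2 ∈ Y} : Finset (V × V)) := by
    have hdisj : Disjoint K₁ (K₁.image Prod.swap) := by
      rw [Finset.disjoint_left]
      intro _ hp hq'
      obtain ⟨q, hq, rfl⟩ := mem_image.1 hq'
      exact hswap q (filter_subset _ _ hq) (filter_subset _ _ hp)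
    rw [two_mul]
    nth_rw 2 [← card_image_of_injective K₁ Prod.swap_injective]
    rw [← card_union_of_disjoint hdisj]
    refine card_le_card fun p hp => ?_
    simp only [K₁, mem_union, mem_image, mem_filter] at hp
    rcases hp with ⟨hp, hp₂⟩ | ⟨q, ⟨hq, hq₂⟩, rfl⟩
    · simpa using ⟨(hK p hp).1, (hK p hp).2, hp₂⟩
    · simpa using ⟨(hK q hq).1.symm, hq₂, (hK q hq).2⟩
  have hout : #(K.filter (·.2 ∉ Y)) ≤ bdryCard G Y := by
    rw [← card_outPairs]
    refine card_le_card fun p hp => ?_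
    simp only [mem_filter] at hp
    exact mem_outPairs.2 ⟨(hK p hp.1).1, (hK p hp.1).2, hp.2⟩
  rw [← card_filter_add_card_filter_not (·.2 ∈ Y)]
  exact add_le_add ((Nat.le_div_iff_mul_le two_pos).2 (by linarith)) hout

section Load

variable {ι : Type*} {Z : ι → Finset V} {w : ι → ℝ} {T : Finset ι}

variable (G Z w T) in
noncomputable def cutLoad (p : V × V) : ℝ := ∑ r ∈ T with p ∈ G.outPairs (Z r), w r

theorem cutLoad_nonneg (hw : ∀ r, 0 ≤ w r) (p : V × V) : 0 ≤ G.cutLoad Z w T p :=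
  sum_nonneg fun r _ => hw r

theorem sum_cutLoad :
    ∑ p ∈ G.adjPairs, G.cutLoad Z w T p = ∑ r ∈ T, w r * bdryCard G (Z r) := by
  simp only [cutLoad, sum_filter]
  rw [sum_comm]
  refine sum_congr rfl fun r _ => ?_
  rw [← sum_filter, ← card_outPairs, mul_comm, ← nsmul_eq_mul, ← sum_const]
  congr 1
  ext p
  simp only [mem_filter, mem_outPairs, adjPairs, mem_univ, true_and]
  tauto

theorem cutLoad_add_cutLoad_swap {p : V × V} (hp : G.Adj p.1 p.2) :
    G.cutLoad Z w T p + G.cutLoad Z w T p.swap =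
      ∑ r ∈ T with (p.1 ∈ Z r ↔ p.2 ∉ Z r), w r := by
  rw [cutLoad, cutLoad, ← sum_union]
  · congr 1
    ext r
    simp only [mem_union, mem_filter, mem_outPairs, Prod.fst_swap, Prod.snd_swap, hp, hp.symm,
      true_and]
    tauto
  · exact disjoint_filter.2 fun r _ h h' => (mem_outPairs.1 h').2.2 (mem_outPairs.1 h).2.1

theorem cutLoad_eq_sum_fiberwise {κ : Type*} [DecidableEq κ] {c : ι → κ} {C : Finset κ}
    (hc : ∀ r ∈ T, c r ∈ C) (p : V × V) :
    G.cutLoad Z w T p = ∑ γ ∈ C, G.cutLoad Z w {r ∈ T | c r = γ} p := by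
  simp only [cutLoad, filter_filter]
  rw [← sum_fiberwise_of_maps_to (fun r hr => hc r (mem_filter.1 hr).1)]
  simp only [filter_filter, and_comm]

theorem sum_map_cutLoad_le_energyR {U : ℝ → ℝ} (hU : ConvexOn ℝ Set.univ U) (hU0 : U 0 = 0)
    (hUeven : ∀ x, U (-x) = U x) (hw : ∀ r, 0 ≤ w r) {φ : V → ℝ}
    (hload : ∀ p : V × V, G.Adj p.1 p.2 →
      G.cutLoad Z w T p + G.cutLoad Z w T p.swap ≤ |φ p.1 - φ p.2|) :
    ∑ p ∈ G.adjPairs, U (G.cutLoad Z w T p) ≤ energyR G U φ := by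
  have hU' : ConvexOn ℝ (Set.Ici 0) U := hU.subset (Set.subset_univ _) (convex_Ici 0)
  have hpair : ∀ p ∈ G.adjPairs,
      U (G.cutLoad Z w T p) + U (G.cutLoad Z w T p.swap) ≤ U (φ p.1 - φ p.2) := fun p hp => by
    have hp : G.Adj p.1 p.2 := by simpa [adjPairs] using hp
    have h₁ := cutLoad_nonneg (G := G) (T := T) (Z := Z) hw p
    have h₂ := cutLoad_nonneg (G := G) (T := T) (Z := Z) hw p.swap
    calc _ ≤ U (G.cutLoad Z w T p + G.cutLoad Z w T p.swap) := hU'.add_le_map_add hU0 h₁ h₂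
      _ ≤ U |φ p.1 - φ p.2| :=
          hU.monotoneOn_of_even hUeven (Set.mem_Ici.2 (add_nonneg h₁ h₂))
            (Set.mem_Ici.2 (abs_nonneg _)) (hload p hp)
      _ = U (φ p.1 - φ p.2) := by
          rcases abs_choice (φ p.1 - φ p.2) with h | h
          · rw [h]
          · rw [h, hUeven]
  have := sum_le_sum hpair
  rw [sum_add_distrib, G.sum_adjPairs_swap fun p => U (G.cutLoad Z w T p)] at this
  rw [energyR_eq_sum_adjPairs]
  linarith

/-- Nested cuts: a pair leaving one of them never leaves another in the opposite direction. -/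
theorem card_support_cutLoad_le (hchain : ∀ r ∈ T, ∀ r' ∈ T, Z r ⊆ Z r' ∨ Z r' ⊆ Z r)
    {Y : Finset V} (hY : ∀ r ∈ T, Z r ⊆ Y) :
    #{p ∈ G.adjPairs | G.cutLoad Z w T p ≠ 0} ≤ inEdgesCard G Y + bdryCard G Y := by
  have hK : ∀ p ∈ {p ∈ G.adjPairs | G.cutLoad Z w T p ≠ 0}, ∃ r ∈ T, p ∈ G.outPairs (Z r) :=
    fun p hp => by
      obtain ⟨r, hr⟩ := nonempty_of_sum_ne_zero (mem_filter.1 hp).2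
      exact ⟨r, (mem_filter.1 hr).1, (mem_filter.1 hr).2⟩
  refine card_le_inEdgesCard_add_bdryCard (fun p hp => ?_) fun p hp hp' => ?_
  · obtain ⟨r, hr, hpr⟩ := hK p hp
    exact ⟨(mem_outPairs.1 hpr).1, hY r hr (mem_outPairs.1 hpr).2.1⟩
  · obtain ⟨r, hr, hpr⟩ := hK p hp
    obtain ⟨r', hr', hpr'⟩ := hK _ hp'
    rw [mem_outPairs] at hpr hpr'
    rcases hchain r hr r' hr' with h | h
    · exact hpr'.2.2 (h hpr.2.1)
    · exact hpr.2.2 (h hpr'.2.1)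

/-- The load of a chain of cuts is carried by at most `M` pairs and totals at least
`m ∑ w`; Jensen's inequality spreads it evenly over `M` pairs. -/
theorem mul_map_le_sum_map_cutLoad {U : ℝ → ℝ} (hU : ConvexOn ℝ Set.univ U) (hU0 : U 0 = 0)
    (hUeven : ∀ x, U (-x) = U x) (hw : ∀ r, 0 ≤ w r)
    (hchain : ∀ r ∈ T, ∀ r' ∈ T, Z r ⊆ Z r' ∨ Z r' ⊆ Z r) {m M : ℕ}
    (hm : ∀ r ∈ T, m ≤ bdryCard G (Z r))
    (hM : ∀ r ∈ T, inEdgesCard G (Z r) + bdryCard G (Z r) ≤ M) :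
    (M : ℝ) * U ((∑ r ∈ T, w r) * m / M) ≤ ∑ p ∈ G.adjPairs, U (G.cutLoad Z w T p) := by
  have hU' : ConvexOn ℝ (Set.Ici 0) U := hU.subset (Set.subset_univ _) (convex_Ici 0)
  have hUnonneg := hU.nonneg_of_even hU0 hUeven
  rcases T.eq_empty_or_nonempty with rfl | hT
  · simpa [hU0] using sum_nonneg fun p (_ : p ∈ G.adjPairs) => hUnonneg (G.cutLoad Z w ∅ p)
  obtain ⟨top, htop, hmax⟩ := exists_max_image T (fun r => #(Z r)) hT
  have hsub : ∀ r ∈ T, Z r ⊆ Z top := fun r hr =>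
    (hchain r hr top htop).elim id fun h => (eq_of_subset_of_card_le h (hmax r hr)) ▸ subset_rfl
  set K := {p ∈ G.adjPairs | G.cutLoad Z w T p ≠ 0}
  have hcard : (#K : ℝ) ≤ M := by
    exact_mod_cast (card_support_cutLoad_le hchain hsub).trans (hM top htop)
  have hmass : (∑ r ∈ T, w r) * m ≤ ∑ p ∈ K, G.cutLoad Z w T p := by
    rw [sum_filter_ne_zero, sum_cutLoad, sum_mul]
    exact sum_le_sum fun r hr => mul_le_mul_of_nonneg_left (by exact_mod_cast hm r hr) (hw r)
  have hmass₀ : 0 ≤ (∑ r ∈ T, w r) * m := mul_nonneg (sum_nonneg fun r _ => hw r) m.cast_nonneg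
  calc (M : ℝ) * U ((∑ r ∈ T, w r) * m / M)
      ≤ M * U ((∑ p ∈ K, G.cutLoad Z w T p) / M) := by
        gcongr
        exact hU.monotoneOn_of_even hUeven (Set.mem_Ici.2 (div_nonneg hmass₀ M.cast_nonneg))
          (Set.mem_Ici.2 (div_nonneg (hmass₀.trans hmass) M.cast_nonneg))
          (div_le_div_of_nonneg_right hmass M.cast_nonneg)
    _ ≤ ∑ p ∈ K, U (G.cutLoad Z w T p) :=
        hU'.mul_map_sum_div_le hU0 K (fun p _ => cutLoad_nonneg hw p) hcard
    _ ≤ ∑ p ∈ G.adjPairs, U (G.cutLoad Z w T p) :=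
        sum_le_sum_of_subset_of_nonneg (filter_subset _ _) fun p _ _ => hUnonneg _

end Load

theorem exists_mem_scaleFamily {l : ℕ} (hl : Fintype.card V < 2 ^ (l + 1)) {X : Finset V}
    {v : V} (hX : memC G X) (hv : v ∈ X) (hcard : #X ≤ Fintype.card V / 2) :
    ∃ i ∈ Icc 1 l, X ∈ scaleFamily G v i := by
  obtain ⟨i, hi, h⟩ := Nat.exists_dyadic_scale hl (card_pos.2 ⟨v, hv⟩) hcard
  exact ⟨i, hi, hX, hv, h⟩

theorem exists_side_mem_scaleFamily {l : ℕ} (hl : Fintype.card V < 2 ^ (l + 1)) {B : Finset V}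
    (hB : memC G B) (hBc : memC G Bᶜ) {a b : V} (ha : a ∉ B) (hb : b ∈ B) :
    ∃ (Z : Finset V) (x : V) (i : ℕ), (Z = Bᶜ ∧ x = a ∨ Z = B ∧ x = b) ∧ i ∈ Icc 1 l ∧
      Z ∈ scaleFamily G x i := by
  by_cases h : #Bᶜ ≤ Fintype.card V / 2
  · obtain ⟨i, hi, hZ⟩ := exists_mem_scaleFamily hl hBc (mem_compl.2 ha) h
    exact ⟨_, _, i, .inl ⟨rfl, rfl⟩, hi, hZ⟩
  · have := card_compl B
    obtain ⟨i, hi, hZ⟩ := exists_mem_scaleFamily hl hB hb (by omega)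
    exact ⟨_, _, i, .inr ⟨rfl, rfl⟩, hi, hZ⟩

variable (G) in
/-- A discrete coarea decomposition of the drop `φ a - φ b` into weighted connected cuts, each
given by its side containing `side r ∈ {a, b}`, at scale `scale r`. -/
structure CutDecomposition (φ : V → ℝ) (a b : V) (l : ℕ) where
  levels : Finset ℕ
  weight : ℕ → ℝ
  cut : ℕ → Finset V
  side : ℕ → V
  scale : ℕ → ℕ
  weight_nonneg : ∀ r, 0 ≤ weight r
  sum_weight : ∑ r ∈ levels, weight r = φ a - φ b
  side_mem : ∀ r ∈ levels, side r ∈ ({a, b} : Finset V)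
  scale_mem : ∀ r ∈ levels, scale r ∈ Icc 1 l
  cut_mem : ∀ r ∈ levels, cut r ∈ scaleFamily G (side r) (scale r)
  chain : ∀ r ∈ levels, ∀ r' ∈ levels, side r = side r' → cut r ⊆ cut r' ∨ cut r' ⊆ cut r
  load_le : ∀ p : V × V, G.Adj p.1 p.2 →
    G.cutLoad cut weight levels p + G.cutLoad cut weight levels p.swap ≤ |φ p.1 - φ p.2|

/-- The levels are the values `t` of `φ` in `[φ b, φ a)`, weighted by the gap to the next value;
the cut at `t` is the smaller side of the cut `cutSide` builds from `{φ > t}`. -/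
theorem exists_cutDecomposition (hG : G.Connected) {l : ℕ} (hl : Fintype.card V < 2 ^ (l + 1))
    {φ : V → ℝ} {a b : V} (hab : φ b < φ a) : Nonempty (G.CutDecomposition φ a b l) := by
  obtain ⟨k, s, hs, hs0, hsk, hstep⟩ := (univ.image φ).exists_levels_between
    (mem_image_of_mem φ (mem_univ b)) (mem_image_of_mem φ (mem_univ a)) hab.le
  set S : ℕ → Set V := fun r => {v | s r < φ v}
  have haS : ∀ r ∈ range k, a ∈ S r := fun r hr =>
    ((hstep r (mem_range.1 hr)).1.trans_le (hs (mem_range.1 hr))).trans_eq hsk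
  have hbS : ∀ r, b ∉ S r := fun r h => (hs0 ▸ hs (Nat.zero_le r)).not_gt h
  have : Nonempty V := ⟨a⟩
  choose! Z x i hZx hi hZ using fun r hr => exists_side_mem_scaleFamily hl
    (memC_cutSide hG (haS r hr) (hbS r)) (memC_compl_cutSide hG (haS r hr) (hbS r))
    (notMem_cutSide (haS r hr) (hbS r)) self_mem_cutSide
  have hB : Monotone fun r => G.cutSide (S r) a b := fun r r' h =>
    cutSide_anti fun v hv => (hs h).trans_lt hv
  have hchain := hB.subset_or_subset_of_side_eq (fun h => hab.ne (by rw [h])) hZx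
  refine ⟨⟨range k, fun r => s (r + 1) - s r, Z, x, i, fun r => sub_nonneg.2 (hs (Nat.le_succ r)),
    by rw [sum_range_sub, hs0, hsk], fun r hr => ?_, hi, hZ, hchain, fun p hp => ?_⟩⟩
  · rcases hZx r hr with ⟨-, h⟩ | ⟨-, h⟩ <;> simp [h]
  rw [cutLoad_add_cutLoad_swap hp]
  refine hs.sum_gaps_separating_le (fun r hr z hz hrz => ?_) fun r hr hcross => ?_
  · obtain rfl | rfl := hz
    exacts [(hstep r hr).2 _ (mem_image_of_mem φ (mem_univ _)) hrz,
      (hstep r hr).2 _ (mem_image_of_mem φ (mem_univ _)) hrz]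
  suffices p.1 ∈ S r ↔ p.2 ∉ S r from this
  refine mem_iff_notMem_of_adj_cutSide (haS r (mem_range.2 hr)) (hbS r) hp ?_
  rcases hZx r (mem_range.2 hr) with ⟨h, -⟩ | ⟨h, -⟩ <;> rw [h] at hcross
  · simp only [mem_compl] at hcross
    tauto
  · exact hcross

namespace CutDecomposition

variable {φ : V → ℝ} {a b : V} {l : ℕ} (D : G.CutDecomposition φ a b l)

noncomputable def weightAt (x : V) (i : ℕ) : ℝ :=
  ∑ r ∈ D.levels with (D.scale r, D.side r) = (i, x), D.weight r

theorem mapsTo_scale_side : ∀ r ∈ D.levels, (D.scale r, D.side r) ∈ Icc 1 l ×ˢ {a, b} :=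
  fun r hr => mem_product.2 ⟨D.scale_mem r hr, D.side_mem r hr⟩

theorem sum_weightAt (hab : a ≠ b) :
    ∑ i ∈ Icc 1 l, (D.weightAt a i + D.weightAt b i) = φ a - φ b := by
  rw [← D.sum_weight, ← sum_fiberwise_of_maps_to D.mapsTo_scale_side, sum_product]
  simp only [sum_pair hab, weightAt]

theorem mul_map_weightAt_le {U : ℝ → ℝ} (hU : ConvexOn ℝ Set.univ U) (hU0 : U 0 = 0)
    (hUeven : ∀ x, U (-x) = U x) (x : V) (i : ℕ) :
    (Mscale G x i : ℝ) * U (D.weightAt x i * mscale G x i / Mscale G x i) ≤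
      ∑ p ∈ G.adjPairs, U (G.cutLoad D.cut D.weight
        {r ∈ D.levels | (D.scale r, D.side r) = (i, x)} p) := by
  have hfam : ∀ r ∈ D.levels.filter fun r => (D.scale r, D.side r) = (i, x),
      D.cut r ∈ scaleFamily G x i := fun r hr => by
    obtain ⟨hrD, hrγ⟩ := mem_filter.1 hr
    obtain ⟨rfl, rfl⟩ := Prod.mk.inj hrγ
    exact D.cut_mem r hrD
  refine mul_map_le_sum_map_cutLoad hU hU0 hUeven D.weight_nonneg (fun r hr r' hr' => ?_)
    (fun r hr => Nat.sInf_le ⟨_, hfam r hr, rfl⟩)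
    (fun r hr => le_csSup ((Set.toFinite _).image _).bddAbove ⟨_, hfam r hr, rfl⟩)
  obtain ⟨hr, hrγ⟩ := mem_filter.1 hr
  obtain ⟨hr', hrγ'⟩ := mem_filter.1 hr'
  exact D.chain r hr r' hr' ((Prod.mk.inj hrγ).2.trans (Prod.mk.inj hrγ').2.symm)

theorem sum_le_energyR (hab : a ≠ b) {U : ℝ → ℝ} (hU : ConvexOn ℝ Set.univ U) (hU0 : U 0 = 0)
    (hUeven : ∀ x, U (-x) = U x) :
    ∑ i ∈ Icc 1 l,
        ((Mscale G a i : ℝ) * U (D.weightAt a i * (mscale G a i : ℝ) / (Mscale G a i : ℝ)) +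
         (Mscale G b i : ℝ) * U (D.weightAt b i * (mscale G b i : ℝ) / (Mscale G b i : ℝ)))
      ≤ energyR G U φ := by
  have hU' : ConvexOn ℝ (Set.Ici 0) U := hU.subset (Set.subset_univ _) (convex_Ici 0)
  calc _ = ∑ γ ∈ Icc 1 l ×ˢ {a, b}, (Mscale G γ.2 γ.1 : ℝ) *
        U (D.weightAt γ.2 γ.1 * mscale G γ.2 γ.1 / Mscale G γ.2 γ.1) := by
        rw [sum_product]
        simp only [sum_pair hab]
    _ ≤ ∑ γ ∈ Icc 1 l ×ˢ {a, b}, ∑ p ∈ G.adjPairs,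
          U (G.cutLoad D.cut D.weight {r ∈ D.levels | (D.scale r, D.side r) = γ} p) :=
        sum_le_sum fun γ _ => D.mul_map_weightAt_le hU hU0 hUeven γ.2 γ.1
    _ = ∑ p ∈ G.adjPairs, ∑ γ ∈ Icc 1 l ×ˢ {a, b},
          U (G.cutLoad D.cut D.weight {r ∈ D.levels | (D.scale r, D.side r) = γ} p) := sum_comm
    _ ≤ ∑ p ∈ G.adjPairs, U (G.cutLoad D.cut D.weight D.levels p) := sum_le_sum fun p _ => by
        rw [cutLoad_eq_sum_fiberwise D.mapsTo_scale_side p]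
        exact hU'.sum_map_le_map_sum hU0 _ fun γ _ => cutLoad_nonneg D.weight_nonneg p
    _ ≤ energyR G U φ := sum_map_cutLoad_le_energyR hU hU0 hUeven D.weight_nonneg D.load_le

end CutDecomposition

end SimpleGraph

theorem energy_estimate_via_isoperimetry_general
    {V : Type*} [Fintype V] (G : SimpleGraph V) (hG : G.Connected)
    (l : ℕ) (hl' : Fintype.card V < 2 ^ (l + 1))
    (U : ℝ → ℝ) (hU : ConvexOn ℝ Set.univ U) (hU0 : U 0 = 0)
    (hUeven : ∀ x, U (-x) = U x)
    (a b : V) (hab : a ≠ b)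
    (φ : V → ℝ) (hφ : φ a - φ b = 1) :
    sInf {r : ℝ | ∃ p q : ℕ → ℝ, (∀ i, 0 ≤ p i) ∧ (∀ i, 0 ≤ q i) ∧
        (∑ i ∈ Finset.Icc 1 l, (p i + q i)) = 1 ∧
        r = ∑ i ∈ Finset.Icc 1 l,
          ((Mscale G a i : ℝ) * U (p i * (mscale G a i : ℝ) / (Mscale G a i : ℝ)) +
           (Mscale G b i : ℝ) * U (q i * (mscale G b i : ℝ) / (Mscale G b i : ℝ)))}
      ≤ energyR G U φ := by
  obtain ⟨D⟩ := SimpleGraph.exists_cutDecomposition hG hl' (by linarith : φ b < φ a)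
  have hUnonneg := hU.nonneg_of_even hU0 hUeven
  have hweight : ∀ x i, 0 ≤ D.weightAt x i := fun x i => sum_nonneg fun r _ => D.weight_nonneg r
  refine le_trans (csInf_le ⟨0, ?_⟩ ?_) (D.sum_le_energyR hab hU hU0 hUeven)
  · rintro _ ⟨p, q, -, -, -, rfl⟩
    exact sum_nonneg fun i _ => add_nonneg (mul_nonneg (Nat.cast_nonneg _) (hUnonneg _))
      (mul_nonneg (Nat.cast_nonneg _) (hUnonneg _))
  · exact ⟨D.weightAt a, D.weightAt b, hweight a, hweight b, (D.sum_weightAt hab).trans hφ, rfl⟩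

/-- **Energy estimate via isoperimetry.**  Let `G` be a finite connected graph,
`2^l ≤ |V(G)| < 2^{l+1}`, `U : ℝ → ℝ` even convex with `U(0) = 0`, and let
`a ≠ b` be vertices such that all `M_i(a), m_i(a), M_i(b), m_i(b)`,
`i = 1, …, l`, are defined.  Then
`inf {∑_e U(∇_e φ) : φ(a) - φ(b) = 1}` is at least
`inf {∑_i M_i(a) U(p_i m_i(a)/M_i(a)) + ∑_i M_i(b) U(q_i m_i(b)/M_i(b))}`
over `p_i, q_i ≥ 0` with total sum `1`. -/
theorem energy_estimate_via_isoperimetry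
    {V : Type*} [Fintype V] (G : SimpleGraph V) (hG : G.Connected)
    (l : ℕ) (hl : 2 ^ l ≤ Fintype.card V) (hl' : Fintype.card V < 2 ^ (l + 1))
    (U : ℝ → ℝ) (hU : ConvexOn ℝ Set.univ U) (hU0 : U 0 = 0)
    (hUeven : ∀ x, U (-x) = U x)
    (a b : V) (hab : a ≠ b)
    (hdef : ∀ i ∈ Finset.Icc 1 l,
      (scaleFamily G a i).Nonempty ∧ (scaleFamily G b i).Nonempty)
    (φ : V → ℝ) (hφ : φ a - φ b = 1) :
    sInf {r : ℝ | ∃ p q : ℕ → ℝ, (∀ i, 0 ≤ p i) ∧ (∀ i, 0 ≤ q i) ∧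
        (∑ i ∈ Finset.Icc 1 l, (p i + q i)) = 1 ∧
        r = ∑ i ∈ Finset.Icc 1 l,
          ((Mscale G a i : ℝ) * U (p i * (mscale G a i : ℝ) / (Mscale G a i : ℝ)) +
           (Mscale G b i : ℝ) * U (q i * (mscale G b i : ℝ) / (Mscale G b i : ℝ)))}
      ≤ energyR G U φ :=
  energy_estimate_via_isoperimetry_general G hG l hl' U hU hU0 hUeven a b hab φ hφ
end
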